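/- arXiv:math/9802107 — 5 statements merged into one kernel-verified Lean document; each statement's English description precedes it below -/
import Mathlib

section
/- Let K be a proper cone in ℝ^n, let A be a linear map with AK ⊆ K, and let x ∈ K. Set y = (I + A)^{n-1} x. Then the face Φ(y) of K generated by y is A-invariant, contains x, and is contained in every A-invariant face of K that contains x; i.e., Φ((I+A)^{n-1}x) is the smallest A-invariant face of K containing x. -/
open Matrix Module

/-- A proper cone of `ℝ^n`: closed, convex, pointed, full. -/
def IsProperCone {n : ℕ} (K : Set (Fin n → ℝ)) : Prop :=
  IsClosed K ∧ (∀ x ∈ K, ∀ y ∈ K, x + y ∈ K) ∧ (∀ (c : ℝ), 0 ≤ c → ∀ x ∈ K, c • x ∈ K) ∧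
    (∀ x ∈ K, -x ∈ K → x = 0) ∧ (interior K).Nonempty

/-- `F` is a face of the cone `K`. -/
def IsFace {n : ℕ} (K F : Set (Fin n → ℝ)) : Prop :=
  F ⊆ K ∧ (∀ x ∈ F, ∀ y ∈ F, x + y ∈ F) ∧ (∀ (c : ℝ), 0 ≤ c → ∀ x ∈ F, c • x ∈ F) ∧
    ∀ u ∈ K, ∀ v ∈ K, u + v ∈ F → u ∈ F ∧ v ∈ F

/-- The smallest face of `K` containing `S`. -/
def faceGen {n : ℕ} (K S : Set (Fin n → ℝ)) : Set (Fin n → ℝ) :=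
  ⋂₀ {F | IsFace K F ∧ S ⊆ F}

/-- The matrix `A` as an endomorphism of `ℂ^n`. -/
noncomputable def toEnd {n : ℕ} (A : Matrix (Fin n) (Fin n) ℂ) : Module.End ℂ (Fin n → ℂ) :=
  Matrix.toLin' A

/-- Sum of the generalized eigenspaces of `A` for eigenvalues other than `μ`. -/
noncomputable def othersSup {n : ℕ} (A : Matrix (Fin n) (Fin n) ℂ) (μ : ℂ) :
    Submodule ℂ (Fin n → ℂ) :=
  ⨆ (ν : ℂ) (_ : ν ≠ μ), (toEnd A).maxGenEigenspace ν

/-- The component of `x` in the generalized eigenspace of `A` for `μ` is nonzero. -/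
def HasComp {n : ℕ} (A : Matrix (Fin n) (Fin n) ℂ) (μ : ℂ) (x : Fin n → ℂ) : Prop :=
  x ∉ othersSup A μ

/-- Local spectral radius of `A` at `x`. -/
noncomputable def locRad {n : ℕ} (A : Matrix (Fin n) (Fin n) ℂ) (x : Fin n → ℂ) : ℝ :=
  sSup {r : ℝ | ∃ μ : ℂ, HasComp A μ x ∧ r = ‖μ‖}

/-- The order of the component of `x` in the generalized eigenspace of `A` for `μ`. -/
noncomputable def compOrd {n : ℕ} (A : Matrix (Fin n) (Fin n) ℂ) (μ : ℂ) (x : Fin n → ℂ) : ℕ :=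
  sInf {k : ℕ | x ∈ LinearMap.ker ((toEnd A - μ • 1) ^ k) ⊔ othersSup A μ}

/-- The order of `x` relative to `A`: maximal order of components of maximal modulus. -/
noncomputable def ordOf {n : ℕ} (A : Matrix (Fin n) (Fin n) ℂ) (x : Fin n → ℂ) : ℕ :=
  sSup {k : ℕ | ∃ μ : ℂ, HasComp A μ x ∧ ‖μ‖ = locRad A x ∧ k = compOrd A μ x}

/-- The spectral pair of `x` relative to `A`. -/
noncomputable def specPair {n : ℕ} (A : Matrix (Fin n) (Fin n) ℂ) (x : Fin n → ℂ) : ℝ × ℝ :=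
  (locRad A x, (ordOf A x : ℝ))

/-- Lexicographic order on pairs of reals. -/
def lexLe (p q : ℝ × ℝ) : Prop := p.1 < q.1 ∨ (p.1 = q.1 ∧ p.2 ≤ q.2)

def lexLt (p q : ℝ × ℝ) : Prop := lexLe p q ∧ p ≠ q

open scoped Classical in
noncomputable def lexMax (p q : ℝ × ℝ) : ℝ × ℝ := if lexLe p q then q else p

/-- Complexification of a real vector. -/
noncomputable def cplx {n : ℕ} (x : Fin n → ℝ) : Fin n → ℂ := fun i => (x i : ℂ)

/-- Complexification of a real matrix. -/
noncomputable def cplxM {n : ℕ} (A : Matrix (Fin n) (Fin n) ℝ) : Matrix (Fin n) (Fin n) ℂ :=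
  A.map (algebraMap ℝ ℂ)

/-- Spectral pair of a real vector relative to a real matrix. -/
noncomputable def specPairR {n : ℕ} (A : Matrix (Fin n) (Fin n) ℝ) (x : Fin n → ℝ) : ℝ × ℝ :=
  specPair (cplxM A) (cplx x)

/-- Local spectral radius of a real matrix at a real vector. -/
noncomputable def locRadR {n : ℕ} (A : Matrix (Fin n) (Fin n) ℝ) (x : Fin n → ℝ) : ℝ :=
  locRad (cplxM A) (cplx x)

/-- Spectral radius of a real matrix (over `ℂ`). -/
noncomputable def specRadR {n : ℕ} (A : Matrix (Fin n) (Fin n) ℝ) : ℝ :=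
  sSup {r : ℝ | ∃ μ : ℂ, μ ∈ spectrum ℂ (cplxM A) ∧ r = ‖μ‖}

/-- Index of `μ` as an eigenvalue of the complex matrix `A`
(least `k` at which the kernels of `(A - μI)^k` stabilize). -/
noncomputable def matIdx {n : ℕ} (A : Matrix (Fin n) (Fin n) ℂ) (μ : ℂ) : ℕ :=
  sInf {k : ℕ | ∀ x : Fin n → ℂ,
    ((A - μ • 1) ^ (k + 1)).mulVec x = 0 → ((A - μ • 1) ^ k).mulVec x = 0}

/-- Spectral radius of the restriction of `A` to the (complexified) span of `F`. -/
noncomputable def faceRad {n : ℕ} (A : Matrix (Fin n) (Fin n) ℝ) (F : Set (Fin n → ℝ)) : ℝ :=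
  sSup {r : ℝ | ∃ μ : ℂ, r = ‖μ‖ ∧
    ∃ x ∈ Submodule.span ℂ (cplx '' F), x ≠ 0 ∧ (cplxM A).mulVec x = μ • x}

/-- Index of `ρ` as an eigenvalue of the restriction of `A` to the span of `F`. -/
noncomputable def faceIdx {n : ℕ} (A : Matrix (Fin n) (Fin n) ℝ) (F : Set (Fin n → ℝ))
    (ρ : ℝ) : ℕ :=
  sInf {k : ℕ | ∀ x ∈ Submodule.span ℂ (cplx '' F),
    ((cplxM A - (ρ : ℂ) • 1) ^ (k + 1)).mulVec x = 0 →
      ((cplxM A - (ρ : ℂ) • 1) ^ k).mulVec x = 0}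

section Aux

variable {n : ℕ} {K : Set (Fin n → ℝ)}

lemma zero_mem_cone (hK : IsProperCone K) : (0 : Fin n → ℝ) ∈ K := by
  obtain ⟨z, hz⟩ := hK.2.2.2.2
  have := hK.2.2.1 0 le_rfl z (interior_subset hz)
  simpa using this

lemma isFace_self (hK : IsProperCone K) : IsFace K K :=
  ⟨subset_rfl, hK.2.1, hK.2.2.1, fun u hu v hv _ => ⟨hu, hv⟩⟩

lemma isFace_faceGen (hK : IsProperCone K) {S : Set (Fin n → ℝ)} (hS : S ⊆ K) :
    IsFace K (faceGen K S) := by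
  have hKmem : K ∈ {F | IsFace K F ∧ S ⊆ F} := ⟨isFace_self hK, hS⟩
  refine ⟨fun z hz => hz K hKmem, ?_, ?_, ?_⟩
  · intro a ha b hb F hF
    exact hF.1.2.1 a (ha F hF) b (hb F hF)
  · intro c hc a ha F hF
    exact hF.1.2.2.1 c hc a (ha F hF)
  · intro u hu v hv huv
    constructor <;> intro F hF
    · exact (hF.1.2.2.2 u hu v hv (huv F hF)).1
    · exact (hF.1.2.2.2 u hu v hv (huv F hF)).2

lemma subset_faceGen {S : Set (Fin n → ℝ)} : S ⊆ faceGen K S := by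
  intro s hs F hF
  exact hF.2 hs

lemma faceGen_subset {S F : Set (Fin n → ℝ)} (hF : IsFace K F) (hSF : S ⊆ F) :
    faceGen K S ⊆ F := fun z hz => hz F ⟨hF, hSF⟩

/-- The explicit description of the face generated by a point `y ∈ K`. -/
def genFace (K : Set (Fin n → ℝ)) (y : Fin n → ℝ) : Set (Fin n → ℝ) :=
  {z | z ∈ K ∧ ∃ t : ℝ, 0 ≤ t ∧ t • y - z ∈ K}

lemma isFace_genFace (hK : IsProperCone K) {y : Fin n → ℝ} (hy : y ∈ K) :
    IsFace K (genFace K y) := by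
  refine ⟨fun z hz => hz.1, ?_, ?_, ?_⟩
  · rintro a ⟨ha, t, ht, hta⟩ b ⟨hb, s, hs, hsb⟩
    refine ⟨hK.2.1 a ha b hb, t + s, by linarith, ?_⟩
    have := hK.2.1 _ hta _ hsb
    have e : (t + s) • y - (a + b) = (t • y - a) + (s • y - b) := by
      rw [add_smul]; abel
    rwa [e]
  · rintro c hc a ⟨ha, t, ht, hta⟩
    refine ⟨hK.2.2.1 c hc a ha, c * t, mul_nonneg hc ht, ?_⟩
    have := hK.2.2.1 c hc _ hta
    have e : (c * t) • y - c • a = c • (t • y - a) := by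
      rw [smul_sub, mul_smul]
    rwa [e]
  · rintro u hu v hv ⟨_, t, ht, htv⟩
    have h1 : t • y - u = (t • y - (u + v)) + v := by abel
    have h2 : t • y - v = (t • y - (u + v)) + u := by abel
    exact ⟨⟨hu, t, ht, h1 ▸ hK.2.1 _ htv _ hv⟩, ⟨hv, t, ht, h2 ▸ hK.2.1 _ htv _ hu⟩⟩

lemma self_mem_genFace (hK : IsProperCone K) {y : Fin n → ℝ} (hy : y ∈ K) :
    y ∈ genFace K y :=
  ⟨hy, 1, zero_le_one, by simpa using zero_mem_cone hK⟩

lemma genFace_subset_face (hK : IsProperCone K) {y : Fin n → ℝ} {F : Set (Fin n → ℝ)}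
    (hF : IsFace K F) (hyF : y ∈ F) : genFace K y ⊆ F := by
  rintro z ⟨hz, t, ht, htz⟩
  have hty : t • y ∈ F := hF.2.2.1 t ht y hyF
  have : z + (t • y - z) ∈ F := by
    have e : z + (t • y - z) = t • y := by abel
    rw [e]; exact hty
  exact (hF.2.2.2 z hz _ htz this).1

lemma faceGen_singleton_eq (hK : IsProperCone K) {y : Fin n → ℝ} (hy : y ∈ K) :
    faceGen K {y} = genFace K y := by
  apply subset_antisymm
  · exact faceGen_subset (isFace_genFace hK hy)
      (Set.singleton_subset_iff.mpr (self_mem_genFace hK hy))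
  · intro z hz F hF
    exact genFace_subset_face hK hF.1 (hF.2 rfl) hz

end Aux

section Aux2

variable {n : ℕ} {K : Set (Fin n → ℝ)}

/-- The linear span of a face, realized as differences of face elements. -/
def faceSub (F : Set (Fin n → ℝ)) (h0 : (0 : Fin n → ℝ) ∈ F)
    (hadd : ∀ x ∈ F, ∀ y ∈ F, x + y ∈ F)
    (hsmul : ∀ c : ℝ, 0 ≤ c → ∀ x ∈ F, c • x ∈ F) : Submodule ℝ (Fin n → ℝ) where
  carrier := {z | ∃ a ∈ F, ∃ b ∈ F, z = a - b}
  add_mem' := by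
    rintro p q ⟨a, ha, b, hb, rfl⟩ ⟨c, hc, d, hd, rfl⟩
    exact ⟨a + c, hadd a ha c hc, b + d, hadd b hb d hd, by abel⟩
  zero_mem' := ⟨0, h0, 0, h0, by simp⟩
  smul_mem' := by
    rintro c p ⟨a, ha, b, hb, rfl⟩
    rcases le_or_gt 0 c with hc | hc
    · exact ⟨c • a, hsmul c hc a ha, c • b, hsmul c hc b hb, by rw [smul_sub]⟩
    · refine ⟨(-c) • b, hsmul (-c) (by linarith) b hb, (-c) • a, hsmul (-c) (by linarith) a ha, ?_⟩
      rw [smul_sub, neg_smul, neg_smul]; abel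

lemma face_zero_mem (hF : IsFace K F) (hne : F.Nonempty) : (0 : Fin n → ℝ) ∈ F := by
  obtain ⟨a, ha⟩ := hne
  simpa using hF.2.2.1 0 le_rfl a ha

lemma cone_inter_span_subset (hK : IsProperCone K) {F : Set (Fin n → ℝ)}
    (hF : IsFace K F) (hne : F.Nonempty) :
    K ∩ (Submodule.span ℝ F : Set (Fin n → ℝ)) ⊆ F := by
  have h0 := face_zero_mem hF hne
  set S := faceSub F h0 hF.2.1 hF.2.2.1 with hS
  have hspan : Submodule.span ℝ F ≤ S := by
    rw [Submodule.span_le]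
    intro a ha
    exact ⟨a, ha, 0, h0, by simp⟩
  rintro z ⟨hzK, hzs⟩
  obtain ⟨a, ha, b, hb, rfl⟩ := hspan hzs
  have hbK : b ∈ K := hF.1 hb
  have : (a - b) + b ∈ F := by rw [sub_add_cancel]; exact ha
  exact (hF.2.2.2 _ hzK b hbK this).1

/-- Strictly larger faces have strictly larger spans. -/
lemma face_span_lt (hK : IsProperCone K) {F G : Set (Fin n → ℝ)}
    (hF : IsFace K F) (hG : IsFace K G) (hne : F.Nonempty) (hFG : F ⊆ G) (hne2 : F ≠ G) :
    Module.finrank ℝ (Submodule.span ℝ F) < Module.finrank ℝ (Submodule.span ℝ G) := by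
  apply Submodule.finrank_lt_finrank_of_lt
  refine lt_of_le_of_ne (Submodule.span_mono hFG) ?_
  intro heq
  apply hne2
  apply subset_antisymm hFG
  intro g hg
  exact cone_inter_span_subset hK hF hne
    ⟨hG.1 hg, heq ▸ Submodule.subset_span hg⟩

end Aux2

section Chain

variable {n : ℕ} {K : Set (Fin n → ℝ)}

lemma one_add_mulVec (A : Matrix (Fin n) (Fin n) ℝ) (v : Fin n → ℝ) :
    (1 + A).mulVec v = v + A.mulVec v := by
  rw [Matrix.add_mulVec, Matrix.one_mulVec]

lemma pow_mulVec_succ (A : Matrix (Fin n) (Fin n) ℝ) (x : Fin n → ℝ) (k : ℕ) :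
    ((1 + A) ^ (k + 1)).mulVec x =
      ((1 + A) ^ k).mulVec x + A.mulVec (((1 + A) ^ k).mulVec x) := by
  rw [pow_succ', ← Matrix.mulVec_mulVec, one_add_mulVec]

lemma pow_mulVec_mem (hK : IsProperCone K) {A : Matrix (Fin n) (Fin n) ℝ}
    (hA : Set.MapsTo A.mulVec K K) {x : Fin n → ℝ} (hx : x ∈ K) (k : ℕ) :
    ((1 + A) ^ k).mulVec x ∈ K := by
  induction k with
  | zero => simpa using hx
  | succ k ih =>
      rw [pow_mulVec_succ]
      exact hK.2.1 _ ih _ (hA ih)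

variable {A : Matrix (Fin n) (Fin n) ℝ} {x : Fin n → ℝ}


/-- The increasing chain of faces. -/
lemma chain_mono (hK : IsProperCone K) (hA : Set.MapsTo A.mulVec K K) (hx : x ∈ K) (k : ℕ) :
    faceGen K {((1 + A) ^ k).mulVec x} ⊆ faceGen K {((1 + A) ^ (k + 1)).mulVec x} := by
  set z := ((1 + A) ^ k).mulVec x with hz
  have hzK : z ∈ K := pow_mulVec_mem hK hA hx k
  have hzK' : ((1 + A) ^ (k + 1)).mulVec x ∈ K := pow_mulVec_mem hK hA hx (k + 1)
  have hface : IsFace K (faceGen K {((1 + A) ^ (k + 1)).mulVec x}) :=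
    isFace_faceGen hK (Set.singleton_subset_iff.mpr hzK')
  have hgen : z + A.mulVec z ∈ faceGen K {((1 + A) ^ (k + 1)).mulVec x} := by
    rw [hz, ← pow_mulVec_succ]; exact subset_faceGen rfl
  have hzmem : z ∈ faceGen K {((1 + A) ^ (k + 1)).mulVec x} :=
    (hface.2.2.2 z hzK _ (hA hzK) hgen).1
  exact faceGen_subset hface (Set.singleton_subset_iff.mpr hzmem)

/-- Once the chain is constant, it stays constant. -/
lemma chain_stab (hK : IsProperCone K) (hA : Set.MapsTo A.mulVec K K) (hx : x ∈ K) (k : ℕ)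
    (h : faceGen K {((1 + A) ^ k).mulVec x} = faceGen K {((1 + A) ^ (k + 1)).mulVec x}) :
    faceGen K {((1 + A) ^ (k + 1)).mulVec x} = faceGen K {((1 + A) ^ (k + 2)).mulVec x} := by
  set z := ((1 + A) ^ k).mulVec x with hzdef
  set w := ((1 + A) ^ (k + 1)).mulVec x with hwdef
  have hzK : z ∈ K := pow_mulVec_mem hK hA hx k
  have hwK : w ∈ K := pow_mulVec_mem hK hA hx (k + 1)
  have hw2K : ((1 + A) ^ (k + 2)).mulVec x ∈ K := pow_mulVec_mem hK hA hx (k + 2)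
  have hwz : w = z + A.mulVec z := pow_mulVec_succ A x k
  -- w ∈ faceGen {z} = genFace z, so ∃ t, t•z - w ∈ K
  have hwmem : w ∈ genFace K z := by
    rw [← faceGen_singleton_eq hK hzK, h]
    exact subset_faceGen rfl
  obtain ⟨_, t, ht, htc⟩ := hwmem
  -- claim : (1+t) • w - ((1+A)^(k+2)).mulVec x ∈ K
  have key : ((1 + A) ^ (k + 2)).mulVec x ∈ genFace K w := by
    refine ⟨hw2K, 1 + t, by linarith, ?_⟩
    have hsum : A.mulVec (t • z - w) + t • z ∈ K :=
      hK.2.1 _ (hA htc) _ (hK.2.2.1 t ht z hzK)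
    have e : (1 + t) • w - ((1 + A) ^ (k + 2)).mulVec x
        = A.mulVec (t • z - w) + t • z := by
      have h2 : ((1 + A) ^ (k + 2)).mulVec x = w + A.mulVec w := pow_mulVec_succ A x (k + 1)
      rw [h2, hwz, Matrix.mulVec_sub, Matrix.mulVec_smul, Matrix.mulVec_add, add_smul, one_smul,
        smul_add]
      abel
    rwa [e]
  rw [← faceGen_singleton_eq hK hwK] at key
  apply subset_antisymm (chain_mono hK hA hx (k + 1))
  exact faceGen_subset (isFace_faceGen hK (Set.singleton_subset_iff.mpr hwK))
    (Set.singleton_subset_iff.mpr key)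

lemma chain_stab_forever (hK : IsProperCone K) (hA : Set.MapsTo A.mulVec K K) (hx : x ∈ K) (k : ℕ)
    (h : faceGen K {((1 + A) ^ k).mulVec x} = faceGen K {((1 + A) ^ (k + 1)).mulVec x})
    (m : ℕ) (hm : k ≤ m) :
    faceGen K {((1 + A) ^ m).mulVec x} = faceGen K {((1 + A) ^ (m + 1)).mulVec x} := by
  induction m with
  | zero => exact (Nat.le_zero.mp hm) ▸ h
  | succ m ih =>
      rcases Nat.lt_or_ge k (m + 1) with hlt | hge
      · exact chain_stab hK hA hx m (ih (Nat.lt_succ_iff.mp hlt))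
      · exact (Nat.le_antisymm hm hge) ▸ h

/-- The chain stabilizes by step `n - 1`. -/
lemma chain_stab_at_pred (hK : IsProperCone K) (hA : Set.MapsTo A.mulVec K K) (hx : x ∈ K) :
    faceGen K {((1 + A) ^ (n - 1)).mulVec x} = faceGen K {((1 + A) ^ n).mulVec x} := by
  by_cases hx0 : x = 0
  · subst hx0; simp [Matrix.mulVec_zero]
  -- there must be k < n with equality
  have hex : ∃ k < n, faceGen K {((1 + A) ^ k).mulVec x}
      = faceGen K {((1 + A) ^ (k + 1)).mulVec x} := by
    by_contra hcon
    push_neg at hcon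
    have hstrict : ∀ k < n, faceGen K {((1 + A) ^ k).mulVec x}
        ≠ faceGen K {((1 + A) ^ (k + 1)).mulVec x} := hcon
    -- dimension count
    have hd : ∀ k ≤ n, Module.finrank ℝ (Submodule.span ℝ
          (faceGen K {((1 + A) ^ 0).mulVec x})) + k
        ≤ Module.finrank ℝ (Submodule.span ℝ (faceGen K {((1 + A) ^ k).mulVec x})) := by
      intro k hk
      induction k with
      | zero => simp
      | succ k ih =>
          have hk' : k < n := Nat.lt_of_succ_le hk
          have h1 := ih (Nat.le_of_lt hk')
          have h2 : Module.finrank ℝ (Submodule.span ℝ (faceGen K {((1 + A) ^ k).mulVec x}))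
              < Module.finrank ℝ (Submodule.span ℝ
                (faceGen K {((1 + A) ^ (k + 1)).mulVec x})) := by
            apply face_span_lt hK
            · exact isFace_faceGen hK
                (Set.singleton_subset_iff.mpr (pow_mulVec_mem hK hA hx k))
            · exact isFace_faceGen hK
                (Set.singleton_subset_iff.mpr (pow_mulVec_mem hK hA hx (k + 1)))
            · exact ⟨_, subset_faceGen rfl⟩
            · exact chain_mono hK hA hx k
            · exact hstrict k hk'
          omega
    have hd0 : 1 ≤ Module.finrank ℝ (Submodule.span ℝ
        (faceGen K {((1 + A) ^ 0).mulVec x})) := by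
      have hxmem : x ∈ faceGen K {((1 + A) ^ 0).mulVec x} := by
        have : ((1 + A) ^ 0).mulVec x = x := by simp
        rw [this]; exact subset_faceGen rfl
      have h1 : Submodule.span ℝ {x} ≤ Submodule.span ℝ
          (faceGen K {((1 + A) ^ 0).mulVec x}) :=
        Submodule.span_mono (Set.singleton_subset_iff.mpr hxmem)
      calc 1 = Module.finrank ℝ (Submodule.span ℝ {x}) := (finrank_span_singleton hx0).symm
        _ ≤ _ := Submodule.finrank_mono h1
    have hle : Module.finrank ℝ (Submodule.span ℝ
        (faceGen K {((1 + A) ^ n).mulVec x})) ≤ n := by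
      simpa using Submodule.finrank_le (Submodule.span ℝ (faceGen K {((1 + A) ^ n).mulVec x}))
    have := hd n le_rfl
    omega
  obtain ⟨k, hkn, hk⟩ := hex
  have h1 : k ≤ n - 1 := Nat.le_pred_of_lt hkn
  have hn1 : n - 1 + 1 = n := Nat.succ_pred_eq_of_pos (Nat.zero_lt_of_lt hkn)
  have := chain_stab_forever hK hA hx k hk (n - 1) h1
  rwa [hn1] at this

end Chain

section Main

variable {n : ℕ} {K : Set (Fin n → ℝ)} {A : Matrix (Fin n) (Fin n) ℝ} {x : Fin n → ℝ}

lemma chain_mono_le (hK : IsProperCone K) (hA : Set.MapsTo A.mulVec K K) (hx : x ∈ K)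
    {k m : ℕ} (hkm : k ≤ m) :
    faceGen K {((1 + A) ^ k).mulVec x} ⊆ faceGen K {((1 + A) ^ m).mulVec x} := by
  induction m with
  | zero => exact (Nat.le_zero.mp hkm) ▸ subset_rfl
  | succ m ih =>
      rcases Nat.lt_or_ge k (m + 1) with hlt | hge
      · exact (ih (Nat.lt_succ_iff.mp hlt)).trans (chain_mono hK hA hx m)
      · exact (Nat.le_antisymm hkm hge) ▸ subset_rfl


end Main

theorem smallest_invariant_face {n : ℕ} (K : Set (Fin n → ℝ)) (hK : IsProperCone K)
    (A : Matrix (Fin n) (Fin n) ℝ) (hA : Set.MapsTo A.mulVec K K)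
    (x : Fin n → ℝ) (hx : x ∈ K)
    (y : Fin n → ℝ) (hy : y = ((1 + A) ^ (n - 1)).mulVec x) :
    IsFace K (faceGen K {y}) ∧
    Set.MapsTo A.mulVec (faceGen K {y}) (faceGen K {y}) ∧
    x ∈ faceGen K {y} ∧
    ∀ G, IsFace K G → Set.MapsTo A.mulVec G G → x ∈ G → faceGen K {y} ⊆ G := by
  subst hy
  set y := ((1 + A) ^ (n - 1)).mulVec x with hydef
  have hyK : y ∈ K := pow_mulVec_mem hK hA hx (n - 1)
  have hface : IsFace K (faceGen K {y}) := isFace_faceGen hK (Set.singleton_subset_iff.mpr hyK)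
  refine ⟨hface, ?_, ?_, ?_⟩
  · -- A-invariance
    have hstab := chain_stab_at_pred hK hA hx
    -- A.mulVec y ∈ faceGen K {y}
    have hAy : A.mulVec y ∈ faceGen K {y} := by
      by_cases hn : n = 0
      · subst hn
        have : A.mulVec y = y := Subsingleton.elim _ _
        rw [this]; exact subset_faceGen rfl
      have hn1 : n - 1 + 1 = n := Nat.succ_pred_eq_of_pos (Nat.pos_of_ne_zero hn)
      have hgen : y + A.mulVec y ∈ faceGen K {((1 + A) ^ n).mulVec x} := by
        rw [hydef, ← pow_mulVec_succ, hn1]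
        exact subset_faceGen rfl
      rw [← hstab] at hgen
      exact (hface.2.2.2 y hyK _ (hA hyK) hgen).2
    -- get s with s • y - A.mulVec y ∈ K
    rw [faceGen_singleton_eq hK hyK] at hAy
    obtain ⟨hAyK, s, hs, hsc⟩ := hAy
    intro z hz
    rw [faceGen_singleton_eq hK hyK] at hz ⊢
    obtain ⟨hzK, t, ht, htc⟩ := hz
    refine ⟨hA hzK, t * s, mul_nonneg ht hs, ?_⟩
    have h1 : A.mulVec (t • y - z) ∈ K := hA htc
    have h2 : t • (s • y - A.mulVec y) ∈ K := hK.2.2.1 t ht _ hsc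
    have e : (t * s) • y - A.mulVec z
        = t • (s • y - A.mulVec y) + A.mulVec (t • y - z) := by
      rw [Matrix.mulVec_sub, Matrix.mulVec_smul, smul_sub, mul_smul]
      abel
    rw [e]
    exact hK.2.1 _ h2 _ h1
  · -- x ∈ faceGen K {y}
    have hx0 : x ∈ faceGen K {((1 + A) ^ 0).mulVec x} := by
      have : ((1 + A) ^ 0).mulVec x = x := by simp
      rw [this]; exact subset_faceGen rfl
    exact chain_mono_le hK hA hx (Nat.zero_le (n - 1)) hx0
  · -- minimality
    intro G hG hAG hxG
    have hyG : ∀ k : ℕ, ((1 + A) ^ k).mulVec x ∈ G := by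
      intro k
      induction k with
      | zero => simpa using hxG
      | succ k ih =>
          rw [pow_mulVec_succ]
          exact hG.2.1 _ ih _ (hAG ih)
    exact faceGen_subset hG (Set.singleton_subset_iff.mpr (hyG (n - 1)))
end

section
/- Let A be an n×n complex matrix and x a nonzero vector with local spectral radius ρ_x(A) > 0. Then sp_A(Ax) = sp_A(x). If instead ρ_x(A) = 0 and x ≠ 0, then sp_A(Ax) = (0, ord_A(x) − 1). -/
open Matrix Module

namespace SpecPairAux

variable {n : ℕ} {A : Matrix (Fin n) (Fin n) ℂ}

lemma disj (A : Matrix (Fin n) (Fin n) ℂ) (μ : ℂ) :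
    Disjoint ((toEnd A).maxGenEigenspace μ) (othersSup A μ) :=
  (toEnd A).independent_maxGenEigenspace μ

lemma exists_decomp (A : Matrix (Fin n) (Fin n) ℂ) (x : Fin n → ℂ) :
    ∃ c : ℂ →₀ (Fin n → ℂ),
      (∀ ν, c ν ∈ (toEnd A).maxGenEigenspace ν) ∧ (c.sum fun _ v => v) = x := by
  have hx : x ∈ ⨆ μ : ℂ, (toEnd A).maxGenEigenspace μ := by
    rw [Module.End.iSup_maxGenEigenspace_eq_top]; trivial
  exact (Submodule.mem_iSup_iff_exists_finsupp _ _).mp hx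

lemma le_others {ν μ : ℂ} (h : ν ≠ μ) :
    (toEnd A).maxGenEigenspace ν ≤ othersSup A μ :=
  le_iSup₂ (f := fun ν (_ : ν ≠ μ) => (toEnd A).maxGenEigenspace ν) ν h

lemma sub_mem_others {c : ℂ →₀ (Fin n → ℂ)}
    (hc : ∀ ν, c ν ∈ (toEnd A).maxGenEigenspace ν)
    {x : Fin n → ℂ} (hsum : (c.sum fun _ v => v) = x) (μ : ℂ) :
    x - c μ ∈ othersSup A μ := by
  classical
  by_cases hμ : μ ∈ c.support
  · have heq : x - c μ = ∑ ν ∈ c.support.erase μ, c ν := by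
      rw [← hsum, Finsupp.sum, ← Finset.add_sum_erase _ _ hμ]
      abel
    rw [heq]
    exact Submodule.sum_mem _ fun ν hν => le_others (Finset.ne_of_mem_erase hν) (hc ν)
  · have h0 : c μ = 0 := Finsupp.notMem_support_iff.mp hμ
    rw [h0, sub_zero, ← hsum, Finsupp.sum]
    exact Submodule.sum_mem _ fun ν hν =>
      le_others (by rintro rfl; exact hμ hν) (hc ν)

lemma mem_others_iff {c : ℂ →₀ (Fin n → ℂ)}
    (hc : ∀ ν, c ν ∈ (toEnd A).maxGenEigenspace ν)
    {x : Fin n → ℂ} (hsum : (c.sum fun _ v => v) = x) (μ : ℂ) :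
    x ∈ othersSup A μ ↔ c μ = 0 := by
  constructor
  · intro hx
    have h1 : c μ ∈ othersSup A μ := by
      have := Submodule.sub_mem _ hx (sub_mem_others hc hsum μ)
      simpa using this
    exact Submodule.disjoint_def.mp (disj A μ) _ (hc μ) h1
  · intro h
    have := sub_mem_others hc hsum μ
    rwa [h, sub_zero] at this

lemma hasComp_iff {c : ℂ →₀ (Fin n → ℂ)}
    (hc : ∀ ν, c ν ∈ (toEnd A).maxGenEigenspace ν)
    {x : Fin n → ℂ} (hsum : (c.sum fun _ v => v) = x) (μ : ℂ) :
    HasComp A μ x ↔ c μ ≠ 0 :=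
  not_congr (mem_others_iff hc hsum μ)

lemma ker_le (μ : ℂ) (k : ℕ) :
    LinearMap.ker ((toEnd A - μ • 1) ^ k) ≤ (toEnd A).maxGenEigenspace μ := fun y hy =>
  ((toEnd A).mem_maxGenEigenspace μ y).mpr ⟨k, LinearMap.mem_ker.mp hy⟩

lemma mem_ker_sup_iff {c : ℂ →₀ (Fin n → ℂ)}
    (hc : ∀ ν, c ν ∈ (toEnd A).maxGenEigenspace ν)
    {x : Fin n → ℂ} (hsum : (c.sum fun _ v => v) = x) (μ : ℂ) (k : ℕ) :
    x ∈ LinearMap.ker ((toEnd A - μ • 1) ^ k) ⊔ othersSup A μ ↔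
      ((toEnd A - μ • 1) ^ k) (c μ) = 0 := by
  constructor
  · intro hmem
    obtain ⟨a, ha, b, hb, hab⟩ := Submodule.mem_sup.mp hmem
    have h1 : c μ - a ∈ (toEnd A).maxGenEigenspace μ :=
      Submodule.sub_mem _ (hc μ) (ker_le μ k ha)
    have h2 : c μ - a ∈ othersSup A μ := by
      have heq : c μ - a = b - (x - c μ) := by rw [← hab]; abel
      rw [heq]
      exact Submodule.sub_mem _ hb (sub_mem_others hc hsum μ)
    have h3 := Submodule.disjoint_def.mp (disj A μ) _ h1 h2
    rw [sub_eq_zero] at h3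
    rw [h3]
    exact LinearMap.mem_ker.mp ha
  · intro h
    have heq : x = c μ + (x - c μ) := by abel
    rw [heq]
    exact Submodule.add_mem_sup (LinearMap.mem_ker.mpr h) (sub_mem_others hc hsum μ)

lemma compOrd_eq {c : ℂ →₀ (Fin n → ℂ)}
    (hc : ∀ ν, c ν ∈ (toEnd A).maxGenEigenspace ν)
    {x : Fin n → ℂ} (hsum : (c.sum fun _ v => v) = x) (μ : ℂ) :
    compOrd A μ x = sInf {k : ℕ | ((toEnd A - μ • 1) ^ k) (c μ) = 0} := by
  unfold compOrd
  congr 1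
  ext k
  exact mem_ker_sup_iff hc hsum μ k

lemma comm_pow (A : Matrix (Fin n) (Fin n) ℂ) (μ : ℂ) (k : ℕ) :
    Commute (toEnd A) ((toEnd A - μ • 1) ^ k) :=
  ((Commute.refl _).sub_right ((Commute.one_right _).smul_right μ)).pow_right k

lemma K1 {ν : ℂ} (hν : ν ≠ 0) {y : Fin n → ℂ}
    (hy : y ∈ (toEnd A).maxGenEigenspace ν) (k : ℕ) :
    ((toEnd A - ν • 1) ^ k) (toEnd A y) = 0 ↔ ((toEnd A - ν • 1) ^ k) y = 0 := by
  have hcomm : ((toEnd A - ν • 1) ^ k) (toEnd A y) = toEnd A (((toEnd A - ν • 1) ^ k) y) := by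
    rw [← Module.End.mul_apply, ← (comm_pow A ν k).eq, Module.End.mul_apply]
  constructor
  · intro h
    set z := ((toEnd A - ν • 1) ^ k) y with hz
    have hz0 : toEnd A z = 0 := by rw [← hcomm, h]
    have hzE : z ∈ (toEnd A).maxGenEigenspace ν := by
      obtain ⟨l, hl⟩ := ((toEnd A).mem_maxGenEigenspace ν y).mp hy
      refine ((toEnd A).mem_maxGenEigenspace ν z).mpr ⟨l, ?_⟩
      rw [hz, ← Module.End.mul_apply, ← pow_add, add_comm, pow_add,
        Module.End.mul_apply, hl, map_zero]
    have hz00 : z ∈ (toEnd A).maxGenEigenspace 0 :=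
      ((toEnd A).mem_maxGenEigenspace 0 z).mpr ⟨1, by simpa using hz0⟩
    have : z = 0 :=
      Submodule.disjoint_def.mp (disj A 0) z hz00 (le_others hν hzE)
    exact this
  · intro h
    rw [hcomm, h, map_zero]

lemma locRad_isGreatest {c : ℂ →₀ (Fin n → ℂ)}
    (hc : ∀ ν, c ν ∈ (toEnd A).maxGenEigenspace ν)
    {x : Fin n → ℂ} (hsum : (c.sum fun _ v => v) = x) (hx : x ≠ 0) :
    IsGreatest {r : ℝ | ∃ μ : ℂ, HasComp A μ x ∧ r = ‖μ‖} (locRad A x) := by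
  classical
  set R := {r : ℝ | ∃ μ : ℂ, HasComp A μ x ∧ r = ‖μ‖} with hR
  have hRsub : R ⊆ ↑(c.support.image fun μ => ‖μ‖) := by
    rintro r ⟨μ, hμ, rfl⟩
    exact Finset.mem_coe.mpr (Finset.mem_image.mpr
      ⟨μ, Finsupp.mem_support_iff.mpr ((hasComp_iff hc hsum μ).mp hμ), rfl⟩)
  have hfin : R.Finite := Set.Finite.subset (Finset.finite_toSet _) hRsub
  have hne : R.Nonempty := by
    have hs : c.support.Nonempty := by
      by_contra h
      rw [Finset.not_nonempty_iff_eq_empty] at h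
      apply hx
      rw [← hsum, Finsupp.sum, h, Finset.sum_empty]
    obtain ⟨μ, hμ⟩ := hs
    exact ⟨‖μ‖, μ, (hasComp_iff hc hsum μ).mpr (Finsupp.mem_support_iff.mp hμ), rfl⟩
  exact ⟨hne.csSup_mem hfin, fun r hr => le_csSup hfin.bddAbove hr⟩

end SpecPairAux

open SpecPairAux

theorem specPair_apply {n : ℕ} (A : Matrix (Fin n) (Fin n) ℂ) (x : Fin n → ℂ) (hx : x ≠ 0) :
    (0 < locRad A x → specPair A (A.mulVec x) = specPair A x) ∧
    (locRad A x = 0 → specPair A (A.mulVec x) = (0, (ordOf A x : ℝ) - 1)) := by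
  classical
  obtain ⟨c, hc, hsum⟩ := exists_decomp A x
  have hAx : A.mulVec x = toEnd A x := (Matrix.toLin'_apply A x).symm
  set c' : ℂ →₀ (Fin n → ℂ) := c.mapRange (toEnd A) (map_zero _) with hc'def
  have hc'app : ∀ ν, c' ν = toEnd A (c ν) := fun ν => Finsupp.mapRange_apply
  have hc' : ∀ ν, c' ν ∈ (toEnd A).maxGenEigenspace ν := fun ν => by
    rw [hc'app]
    exact Module.End.mapsTo_maxGenEigenspace_of_comm (Commute.refl _) ν (hc ν)
  have hsum' : (c'.sum fun _ v => v) = A.mulVec x := by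
    rw [hAx, ← hsum, hc'def, Finsupp.sum_mapRange_index (fun _ => rfl)]
    exact (map_finsuppSum (toEnd A) c fun _ v => v).symm
  have hGx := locRad_isGreatest hc hsum hx
  constructor
  · -- case locRad > 0
    intro hρ
    obtain ⟨μ₀, hcomp₀, hμ₀⟩ := hGx.1
    have hc₀ : c μ₀ ≠ 0 := (hasComp_iff hc hsum μ₀).mp hcomp₀
    have hμ₀0 : μ₀ ≠ 0 := by
      intro h; rw [h, norm_zero] at hμ₀; exact hρ.ne' hμ₀
    have hc'₀ : c' μ₀ ≠ 0 := by
      rw [hc'app]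
      intro h
      exact hc₀ (by simpa using (K1 hμ₀0 (hc μ₀) 0).mp (by simpa using h))
    have hAx0 : A.mulVec x ≠ 0 := by
      intro h
      have : HasComp A μ₀ (A.mulVec x) := (hasComp_iff hc' hsum' μ₀).mpr hc'₀
      rw [h] at this
      exact this (Submodule.zero_mem _)
    have hG' := locRad_isGreatest hc' hsum' hAx0
    have hloc : locRad A (A.mulVec x) = locRad A x := by
      apply le_antisymm
      · obtain ⟨μ, hμcomp, hμeq⟩ := hG'.1
        have : c μ ≠ 0 := by
          intro h
          apply (hasComp_iff hc' hsum' μ).mp hμcomp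
          rw [hc'app, h, map_zero]
        rw [hμeq]
        exact hGx.2 ⟨μ, (hasComp_iff hc hsum μ).mpr this, rfl⟩
      · rw [hμ₀]
        exact hG'.2 ⟨μ₀, (hasComp_iff hc' hsum' μ₀).mpr hc'₀, rfl⟩
    have key : ∀ μ : ℂ, μ ≠ 0 →
        (HasComp A μ (A.mulVec x) ↔ HasComp A μ x) ∧
          compOrd A μ (A.mulVec x) = compOrd A μ x := by
      intro μ hμ
      constructor
      · rw [hasComp_iff hc' hsum' μ, hasComp_iff hc hsum μ, hc'app]
        constructor
        · intro h h0; exact h (by rw [h0, map_zero])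
        · intro h h0
          exact h (by simpa using (K1 hμ (hc μ) 0).mp (by simpa using h0))
      · rw [compOrd_eq hc' hsum' μ, compOrd_eq hc hsum μ]
        congr 1
        ext k
        rw [Set.mem_setOf_eq, Set.mem_setOf_eq, hc'app]
        exact K1 hμ (hc μ) k
    have hord : ordOf A (A.mulVec x) = ordOf A x := by
      unfold ordOf
      rw [hloc]
      congr 1
      ext k
      constructor
      · rintro ⟨μ, h1, h2, h3⟩
        have hμ0 : μ ≠ 0 := by
          intro h; rw [h, norm_zero] at h2; exact hρ.ne' h2.symm
        exact ⟨μ, ((key μ hμ0).1).mp h1, h2, h3.trans ((key μ hμ0).2)⟩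
      · rintro ⟨μ, h1, h2, h3⟩
        have hμ0 : μ ≠ 0 := by
          intro h; rw [h, norm_zero] at h2; exact hρ.ne' h2.symm
        exact ⟨μ, ((key μ hμ0).1).mpr h1, h2, h3.trans ((key μ hμ0).2).symm⟩
    unfold specPair
    rw [hloc, hord]
  · -- case locRad = 0
    intro hρ0
    have hzero : toEnd A - (0 : ℂ) • (1 : Module.End ℂ (Fin n → ℂ)) = toEnd A := by
      rw [zero_smul, sub_zero]
    -- support is {0}
    have hforced : ∀ μ : ℂ, c μ ≠ 0 → μ = 0 := by
      intro μ hμ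
      have := hGx.2 ⟨μ, (hasComp_iff hc hsum μ).mpr hμ, rfl⟩
      rw [hρ0] at this
      exact norm_eq_zero.mp (le_antisymm this (norm_nonneg _))
    have hsupp : c.support ⊆ {0} := by
      intro ν hν
      simp only [Finset.mem_singleton]
      exact hforced ν (Finsupp.mem_support_iff.mp hν)
    have hc0x : c 0 = x := by
      rw [← hsum, Finsupp.sum]
      rw [Finset.sum_subset hsupp (fun ν _ hν => Finsupp.notMem_support_iff.mp hν)]
      simp
    have hc0 : c 0 ≠ 0 := by rw [hc0x]; exact hx
    have hcompiff : ∀ μ : ℂ, HasComp A μ x ↔ μ = 0 := by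
      intro μ
      rw [hasComp_iff hc hsum μ]
      constructor
      · exact hforced μ
      · rintro rfl; exact hc0
    -- m and the set S
    set S : Set ℕ := {k | ((toEnd A) ^ k) x = 0} with hSdef
    have hm : compOrd A 0 x = sInf S := by
      rw [compOrd_eq hc hsum 0, hc0x]
      congr 1
      ext k
      rw [Set.mem_setOf_eq, Set.mem_setOf_eq, hzero]
    set m := sInf S with hmdef
    have hSne : S.Nonempty := by
      obtain ⟨k, hk⟩ := ((toEnd A).mem_maxGenEigenspace 0 x).mp (hc0x ▸ hc 0)
      rw [hzero] at hk
      exact ⟨k, hk⟩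
    have hmmem : ((toEnd A) ^ m) x = 0 := Nat.sInf_mem hSne
    have hm1 : 1 ≤ m := by
      rcases Nat.eq_zero_or_pos m with h | h
      · exfalso; apply hx; have h2 := hmmem; rw [h, pow_zero] at h2; simpa using h2
      · exact h
    have hSiff : ∀ k, k ∈ S ↔ m ≤ k := by
      intro k
      constructor
      · exact fun h => Nat.sInf_le h
      · intro h
        show ((toEnd A) ^ k) x = 0
        rw [← Nat.sub_add_cancel h, pow_add, Module.End.mul_apply, hmmem, map_zero]
    have hordx : ordOf A x = m := by
      unfold ordOf
      have : {k : ℕ | ∃ μ : ℂ, HasComp A μ x ∧ ‖μ‖ = locRad A x ∧ k = compOrd A μ x}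
          = {m} := by
        ext k
        simp only [Set.mem_setOf_eq, Set.mem_singleton_iff]
        constructor
        · rintro ⟨μ, h1, _, h3⟩
          rw [(hcompiff μ).mp h1] at h3
          rw [h3, hm]
        · rintro rfl
          exact ⟨0, (hcompiff 0).mpr rfl, by rw [norm_zero, hρ0], by rw [hm]⟩
      rw [this, csSup_singleton]
    by_cases hAxz : A.mulVec x = 0
    · -- m = 1
      have h1S : (1 : ℕ) ∈ S := by
        show ((toEnd A) ^ 1) x = 0
        rw [pow_one, ← hAx]; exact hAxz
      have hm1' : m = 1 := le_antisymm (Nat.sInf_le h1S) hm1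
      have hnoComp : ∀ μ : ℂ, ¬ HasComp A μ (A.mulVec x) := by
        intro μ h
        rw [hAxz] at h
        exact h (Submodule.zero_mem _)
      have hloc0 : locRad A (A.mulVec x) = 0 := by
        unfold locRad
        have : {r : ℝ | ∃ μ : ℂ, HasComp A μ (A.mulVec x) ∧ r = ‖μ‖} = ∅ := by
          ext r; simp only [Set.mem_setOf_eq, Set.mem_empty_iff_false, iff_false]
          rintro ⟨μ, h1, _⟩; exact hnoComp μ h1
        rw [this, Real.sSup_empty]
      have hord0 : ordOf A (A.mulVec x) = 0 := by
        unfold ordOf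
        have : {k : ℕ | ∃ μ : ℂ, HasComp A μ (A.mulVec x) ∧
            ‖μ‖ = locRad A (A.mulVec x) ∧ k = compOrd A μ (A.mulVec x)} = ∅ := by
          ext k; simp only [Set.mem_setOf_eq, Set.mem_empty_iff_false, iff_false]
          rintro ⟨μ, h1, _⟩; exact hnoComp μ h1
        rw [this, csSup_empty]
        rfl
      unfold specPair
      rw [hloc0, hord0, hordx, hm1']
      norm_num
    · -- A.mulVec x ≠ 0, in gen eigenspace of 0
      have hAxE : A.mulVec x ∈ (toEnd A).maxGenEigenspace 0 := by
        rw [hAx]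
        exact Module.End.mapsTo_maxGenEigenspace_of_comm (Commute.refl _) 0 (hc0x ▸ hc 0)
      set c'' : ℂ →₀ (Fin n → ℂ) := Finsupp.single 0 (A.mulVec x) with hc''def
      have hc'' : ∀ ν, c'' ν ∈ (toEnd A).maxGenEigenspace ν := by
        intro ν
        by_cases hν : ν = 0
        · rw [hν, hc''def, Finsupp.single_eq_same]; exact hAxE
        · rw [hc''def, Finsupp.single_eq_of_ne' (Ne.symm hν)]
          exact Submodule.zero_mem _
      have hsum'' : (c''.sum fun _ v => v) = A.mulVec x := by
        rw [hc''def]; exact Finsupp.sum_single_index rfl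
      have hcompiff'' : ∀ μ : ℂ, HasComp A μ (A.mulVec x) ↔ μ = 0 := by
        intro μ
        rw [hasComp_iff hc'' hsum'' μ, hc''def]
        by_cases hμ : μ = 0
        · subst hμ; simp [Finsupp.single_eq_same, hAxz]
        · simp [Finsupp.single_eq_of_ne' (Ne.symm hμ), hμ]
      have hloc0 : locRad A (A.mulVec x) = 0 := by
        unfold locRad
        have : {r : ℝ | ∃ μ : ℂ, HasComp A μ (A.mulVec x) ∧ r = ‖μ‖} = {0} := by
          ext r
          simp only [Set.mem_setOf_eq, Set.mem_singleton_iff]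
          constructor
          · rintro ⟨μ, h1, rfl⟩
            rw [(hcompiff'' μ).mp h1, norm_zero]
          · rintro rfl
            exact ⟨0, (hcompiff'' 0).mpr rfl, norm_zero.symm⟩
        rw [this, csSup_singleton]
      have hcompAx : compOrd A 0 (A.mulVec x) = m - 1 := by
        rw [compOrd_eq hc'' hsum'' 0]
        have hc''0 : c'' 0 = A.mulVec x := by rw [hc''def, Finsupp.single_eq_same]
        have hseteq : {k : ℕ | ((toEnd A - (0:ℂ) • 1) ^ k) (c'' 0) = 0} = {k | m - 1 ≤ k} := by
          ext k
          rw [Set.mem_setOf_eq, Set.mem_setOf_eq, hzero, hc''0, hAx]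
          have : ((toEnd A) ^ k) (toEnd A x) = ((toEnd A) ^ (k + 1)) x := by
            rw [pow_succ, Module.End.mul_apply]
          rw [this, show (((toEnd A) ^ (k+1)) x = 0) ↔ (k+1) ∈ S from Iff.rfl, hSiff]
          omega
        rw [hseteq]
        apply le_antisymm
        · exact Nat.sInf_le (by rw [Set.mem_setOf_eq])
        · exact Nat.sInf_mem (⟨m - 1, by rw [Set.mem_setOf_eq]⟩ : {k : ℕ | m - 1 ≤ k}.Nonempty)
      have hord'' : ordOf A (A.mulVec x) = m - 1 := by
        unfold ordOf
        have : {k : ℕ | ∃ μ : ℂ, HasComp A μ (A.mulVec x) ∧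
            ‖μ‖ = locRad A (A.mulVec x) ∧ k = compOrd A μ (A.mulVec x)} = {m - 1} := by
          ext k
          simp only [Set.mem_setOf_eq, Set.mem_singleton_iff]
          constructor
          · rintro ⟨μ, h1, _, h3⟩
            rw [(hcompiff'' μ).mp h1] at h3
            rw [h3, hcompAx]
          · rintro rfl
            exact ⟨0, (hcompiff'' 0).mpr rfl, by rw [norm_zero, hloc0], hcompAx.symm⟩
        rw [this, csSup_singleton]
      unfold specPair
      rw [hloc0, hord'', hordx]
      refine Prod.ext rfl ?_
      simp only
      rw [Nat.cast_sub hm1, Nat.cast_one]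
end

section
/- Let K be a proper cone in ℝ^n and A a real matrix with AK ⊆ K. For x, y ∈ K, sp_A(x + y) = max{sp_A(x), sp_A(y)} in the lexicographic order. -/
open Matrix Module

namespace SPAux

open Module Filter Topology

variable {n : ℕ} (B : Matrix (Fin n) (Fin n) ℂ)

/-- Generalized eigenspace. -/
noncomputable def G (μ : ℂ) : Submodule ℂ (Fin n → ℂ) := (toEnd B).maxGenEigenspace μ

lemma isCompl_GO (μ : ℂ) : IsCompl (G B μ) (othersSup B μ) := by
  constructor
  · exact (Module.End.independent_maxGenEigenspace (toEnd B)) μ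
  · rw [codisjoint_iff_le_sup]
    rw [← Module.End.iSup_maxGenEigenspace_eq_top (toEnd B)]
    refine iSup_le fun ν => ?_
    rcases eq_or_ne ν μ with rfl | hν
    · exact le_sup_left
    · exact le_trans (le_iSup₂ (f := fun ν (_ : ν ≠ μ) => (toEnd B).maxGenEigenspace ν) ν hν)
        le_sup_right

/-- Spectral projection onto the generalized eigenspace of `μ`. -/
noncomputable def P (μ : ℂ) : (Fin n → ℂ) →ₗ[ℂ] (Fin n → ℂ) :=
  (G B μ).subtype ∘ₗ Submodule.projectionOnto (G B μ) (othersSup B μ) (isCompl_GO B μ)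

lemma P_mem (μ : ℂ) (x : Fin n → ℂ) : P B μ x ∈ G B μ := by
  simp [P]

lemma P_apply_left {μ : ℂ} {x : Fin n → ℂ} (hx : x ∈ G B μ) : P B μ x = x := by
  have := Submodule.projectionOnto_apply_left (isCompl_GO B μ) ⟨x, hx⟩
  simp only [P, LinearMap.comp_apply, Submodule.subtype_apply]
  rw [this]

lemma P_apply_right {μ : ℂ} {x : Fin n → ℂ} (hx : x ∈ othersSup B μ) : P B μ x = 0 := by
  simp [P, Submodule.projectionOnto_apply_of_mem_right (isCompl_GO B μ) hx]

lemma P_eq_zero_iff {μ : ℂ} {x : Fin n → ℂ} : P B μ x = 0 ↔ x ∈ othersSup B μ := by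
  constructor
  · intro h
    rw [← Submodule.projectionOnto_apply_eq_zero_iff (isCompl_GO B μ) (x := x)]
    simpa [P, Submodule.coe_eq_zero] using h
  · exact P_apply_right B

lemma hasComp_iff {μ : ℂ} {x : Fin n → ℂ} : HasComp B μ x ↔ P B μ x ≠ 0 := by
  rw [HasComp, ← P_eq_zero_iff]

end SPAux
namespace SPAux

variable {n : ℕ} (B : Matrix (Fin n) (Fin n) ℂ)

lemma T_mapsTo_G (μ : ℂ) {x : Fin n → ℂ} (hx : x ∈ G B μ) : toEnd B x ∈ G B μ :=
  Module.End.mapsTo_maxGenEigenspace_of_comm (Commute.refl (toEnd B)) μ hx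

lemma T_mapsTo_O (μ : ℂ) {x : Fin n → ℂ} (hx : x ∈ othersSup B μ) :
    toEnd B x ∈ othersSup B μ := by
  have hx' : x ∈ ⨆ ν : {ν : ℂ // ν ≠ μ}, (toEnd B).maxGenEigenspace ν := by
    rw [othersSup, iSup_subtype'] at hx; exact hx
  refine Submodule.iSup_induction (motive := fun y => toEnd B y ∈ othersSup B μ) _ hx' ?_ ?_ ?_
  · rintro ⟨ν, hν⟩ y hy
    exact Submodule.mem_iSup_of_mem ν (Submodule.mem_iSup_of_mem hν (T_mapsTo_G B ν hy))
  · simp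
  · intro a b ha hb; simpa using add_mem ha hb

lemma P_comm_T (μ : ℂ) (x : Fin n → ℂ) : P B μ (toEnd B x) = toEnd B (P B μ x) := by
  have hd : x = P B μ x + (x - P B μ x) := by abel
  have hmem : x - P B μ x ∈ othersSup B μ := by
    have h1 : P B μ (x - P B μ x) = 0 := by
      have : P B μ (P B μ x) = P B μ x := P_apply_left B (P_mem B μ x)
      simp [map_sub, this]
    exact (P_eq_zero_iff B).mp h1
  calc P B μ (toEnd B x) = P B μ (toEnd B (P B μ x) + toEnd B (x - P B μ x)) := by
        rw [← map_add]; rw [← hd]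
    _ = P B μ (toEnd B (P B μ x)) + P B μ (toEnd B (x - P B μ x)) := map_add _ _ _
    _ = toEnd B (P B μ x) := by
        rw [P_apply_left B (T_mapsTo_G B μ (P_mem B μ x)),
          P_apply_right B (T_mapsTo_O B μ hmem), add_zero]

lemma P_comm_T_pow (μ : ℂ) (k : ℕ) (x : Fin n → ℂ) :
    P B μ ((toEnd B ^ k) x) = (toEnd B ^ k) (P B μ x) := by
  induction k with
  | zero => simp
  | succ k ih =>
    rw [pow_succ']
    simp only [Module.End.mul_apply]
    rw [P_comm_T, ih]

/-- decomposition of `x` into its components -/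
lemma exists_decomp (x : Fin n → ℂ) :
    ∃ f : ℂ →₀ (Fin n → ℂ), (∀ μ, f μ ∈ G B μ) ∧ (f.sum fun _ v => v) = x ∧
      ∀ μ, P B μ x = f μ := by
  have hx : x ∈ ⨆ μ, (toEnd B).maxGenEigenspace μ := by
    rw [Module.End.iSup_maxGenEigenspace_eq_top]; trivial
  rw [Submodule.mem_iSup_iff_exists_finsupp] at hx
  obtain ⟨f, hf, hsum⟩ := hx
  refine ⟨f, hf, hsum, fun μ => ?_⟩
  have : P B μ x = f.sum fun ν v => P B μ v := by
    rw [← hsum, Finsupp.sum, Finsupp.sum, map_sum]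
  rw [this, Finsupp.sum]
  by_cases hμ : μ ∈ f.support
  · rw [Finset.sum_eq_single μ]
    · exact P_apply_left B (hf μ)
    · intro ν _ hν
      refine P_apply_right B ?_
      exact Submodule.mem_iSup_of_mem ν (Submodule.mem_iSup_of_mem hν (hf ν))
    · intro h; exact absurd hμ h
  · rw [Finset.sum_eq_zero, Finsupp.notMem_support_iff.mp hμ]
    intro ν hν
    have hνμ : ν ≠ μ := fun h => hμ (h ▸ hν)
    exact P_apply_right B (Submodule.mem_iSup_of_mem ν (Submodule.mem_iSup_of_mem hνμ (hf ν)))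

lemma eq_sum_P (x : Fin n → ℂ) :
    ∃ s : Finset ℂ, (∀ μ ∈ s, P B μ x ≠ 0) ∧ x = ∑ μ ∈ s, P B μ x := by
  obtain ⟨f, hf, hsum, hP⟩ := exists_decomp B x
  refine ⟨f.support, fun μ hμ => ?_, ?_⟩
  · rw [hP μ]; exact Finsupp.mem_support_iff.mp hμ
  · rw [Finsupp.sum] at hsum
    exact ((Finset.sum_congr rfl fun μ _ => hP μ).trans hsum).symm

end SPAux
namespace SPAux

variable {n : ℕ} (B : Matrix (Fin n) (Fin n) ℂ)

lemma finite_comp (x : Fin n → ℂ) : Set.Finite {μ : ℂ | P B μ x ≠ 0} := by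
  obtain ⟨f, _, _, hP⟩ := exists_decomp B x
  refine Set.Finite.subset f.support.finite_toSet fun μ hμ => ?_
  simp only [Set.mem_setOf_eq, hP μ] at hμ
  exact Finsupp.mem_support_iff.mpr hμ

lemma exists_comp {x : Fin n → ℂ} (hx : x ≠ 0) : ∃ μ, P B μ x ≠ 0 := by
  by_contra h
  push_neg at h
  obtain ⟨s, _, hsum⟩ := eq_sum_P B x
  exact hx (by rw [hsum]; exact Finset.sum_eq_zero fun μ _ => h μ)

lemma locRad_set_eq (x : Fin n → ℂ) :
    {r : ℝ | ∃ μ, HasComp B μ x ∧ r = ‖μ‖} = (fun μ : ℂ => ‖μ‖) '' {μ | P B μ x ≠ 0} := by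
  ext r
  simp only [Set.mem_setOf_eq, Set.mem_image, hasComp_iff]
  exact ⟨fun ⟨μ, h1, h2⟩ => ⟨μ, h1, h2.symm⟩, fun ⟨μ, h1, h2⟩ => ⟨μ, h1, h2.symm⟩⟩

lemma locRad_spec {x : Fin n → ℂ} (hx : x ≠ 0) :
    (∃ μ, P B μ x ≠ 0 ∧ ‖μ‖ = locRad B x) ∧
      ∀ μ, P B μ x ≠ 0 → ‖μ‖ ≤ locRad B x := by
  have hfin : ({r : ℝ | ∃ μ, HasComp B μ x ∧ r = ‖μ‖}).Finite := by
    rw [locRad_set_eq]; exact (finite_comp B x).image _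
  have hne : ({r : ℝ | ∃ μ, HasComp B μ x ∧ r = ‖μ‖}).Nonempty := by
    obtain ⟨μ, hμ⟩ := exists_comp B hx
    exact ⟨‖μ‖, μ, (hasComp_iff B).mpr hμ, rfl⟩
  constructor
  · have := hne.csSup_mem hfin
    obtain ⟨μ, h1, h2⟩ := this
    exact ⟨μ, (hasComp_iff B).mp h1, h2.symm⟩
  · intro μ hμ
    exact le_csSup hfin.bddAbove ⟨μ, (hasComp_iff B).mpr hμ, rfl⟩

lemma locRad_nonneg {x : Fin n → ℂ} (hx : x ≠ 0) : 0 ≤ locRad B x := by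
  obtain ⟨⟨μ, _, hμ⟩, _⟩ := locRad_spec B hx
  rw [← hμ]; exact norm_nonneg μ

lemma locRad_zero : locRad B 0 = 0 := by
  have : {r : ℝ | ∃ μ, HasComp B μ (0 : Fin n → ℂ) ∧ r = ‖μ‖} = (∅ : Set ℝ) := by
    ext r
    simp only [Set.mem_setOf_eq, Set.mem_empty_iff_false, iff_false, not_exists]
    rintro μ ⟨h, _⟩
    exact h (zero_mem _)
  rw [locRad, this, Real.sSup_empty]

lemma compOrd_set_eq (μ : ℂ) (x : Fin n → ℂ) :
    {k : ℕ | x ∈ LinearMap.ker ((toEnd B - μ • 1) ^ k) ⊔ othersSup B μ} =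
      {k : ℕ | ((toEnd B - μ • 1) ^ k) (P B μ x) = 0} := by
  ext k
  have hker : LinearMap.ker ((toEnd B - μ • 1) ^ k) ≤ G B μ := by
    rw [← Module.End.genEigenspace_nat (f := toEnd B) (μ := μ) (k := k)]
    exact Module.End.genEigenspace_le_maximal ..
  simp only [Set.mem_setOf_eq]
  constructor
  · intro h
    obtain ⟨a, ha, b, hb, hab⟩ := Submodule.mem_sup.mp h
    have : P B μ x = a := by
      rw [← hab, map_add, P_apply_left B (hker ha), P_apply_right B hb, add_zero]
    rw [this]
    exact ha
  · intro h
    refine Submodule.mem_sup.mpr ⟨P B μ x, h, x - P B μ x, ?_, by abel⟩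
    rw [← P_eq_zero_iff]
    have : P B μ (P B μ x) = P B μ x := P_apply_left B (P_mem B μ x)
    simp [map_sub, this]

lemma compOrd_mem (μ : ℂ) (x : Fin n → ℂ) :
    ((toEnd B - μ • 1) ^ compOrd B μ x) (P B μ x) = 0 := by
  have hne : {k : ℕ | ((toEnd B - μ • 1) ^ k) (P B μ x) = 0}.Nonempty := by
    obtain ⟨k, hk⟩ := (Module.End.mem_maxGenEigenspace (toEnd B) μ (P B μ x)).mp (P_mem B μ x)
    exact ⟨k, hk⟩
  have := Nat.sInf_mem hne
  rw [compOrd, compOrd_set_eq]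
  exact Nat.sInf_mem hne

lemma compOrd_min {μ : ℂ} {x : Fin n → ℂ} {k : ℕ} (hk : k < compOrd B μ x) :
    ((toEnd B - μ • 1) ^ k) (P B μ x) ≠ 0 := by
  rw [compOrd, compOrd_set_eq] at hk
  exact Nat.notMem_of_lt_sInf hk

lemma compOrd_pos {μ : ℂ} {x : Fin n → ℂ} (h : P B μ x ≠ 0) : 1 ≤ compOrd B μ x := by
  by_contra hc
  push_neg at hc
  interval_cases h' : compOrd B μ x
  · have := compOrd_mem B μ x
    rw [h'] at this
    simp at this
    exact h this

lemma ordOf_spec {x : Fin n → ℂ} (hx : x ≠ 0) :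
    (∃ μ, P B μ x ≠ 0 ∧ ‖μ‖ = locRad B x ∧ ordOf B x = compOrd B μ x) ∧
      ∀ μ, P B μ x ≠ 0 → ‖μ‖ = locRad B x → compOrd B μ x ≤ ordOf B x := by
  set S := {k : ℕ | ∃ μ, HasComp B μ x ∧ ‖μ‖ = locRad B x ∧ k = compOrd B μ x} with hS
  have hfin : S.Finite := by
    refine Set.Finite.subset (((finite_comp B x).image (fun μ => compOrd B μ x))) ?_
    rintro k ⟨μ, h1, _, h3⟩
    exact ⟨μ, (hasComp_iff B).mp h1, h3.symm⟩
  have hne : S.Nonempty := by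
    obtain ⟨⟨μ, h1, h2⟩, _⟩ := locRad_spec B hx
    exact ⟨compOrd B μ x, μ, (hasComp_iff B).mpr h1, h2, rfl⟩
  constructor
  · have := Nat.sSup_mem hne hfin.bddAbove
    obtain ⟨μ, h1, h2, h3⟩ := this
    exact ⟨μ, (hasComp_iff B).mp h1, h2, h3⟩
  · intro μ h1 h2
    exact le_csSup hfin.bddAbove ⟨μ, (hasComp_iff B).mpr h1, h2, rfl⟩

lemma ordOf_pos {x : Fin n → ℂ} (hx : x ≠ 0) : 1 ≤ ordOf B x := by
  obtain ⟨⟨μ, h1, _, h3⟩, _⟩ := ordOf_spec B hx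
  rw [h3]
  exact compOrd_pos B h1

end SPAux
namespace SPAux

variable {n : ℕ} (B : Matrix (Fin n) (Fin n) ℂ)

/-- `A - μ` as an operator. -/
noncomputable def Nop (μ : ℂ) : Module.End ℂ (Fin n → ℂ) := toEnd B - μ • 1

lemma pow_expand (μ : ℂ) (k : ℕ) :
    toEnd B ^ k = ∑ j ∈ Finset.range (k + 1),
      (k.choose j : ℂ) • (μ ^ (k - j) • (Nop B μ ^ j)) := by
  have hT : toEnd B = Nop B μ + μ • 1 := by rw [Nop]; abel
  have hc : Commute (Nop B μ) ((μ : ℂ) • (1 : Module.End ℂ (Fin n → ℂ))) :=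
    (Commute.one_right (Nop B μ)).smul_right μ
  rw [hT, hc.add_pow]
  refine Finset.sum_congr rfl fun j hj => ?_
  rw [smul_pow, one_pow, mul_smul_comm, smul_mul_assoc, mul_one, smul_comm]
  rw [← (Nat.cast_commute (k.choose j) (Nop B μ ^ j)).eq, ← nsmul_eq_mul,
    ← Nat.cast_smul_eq_nsmul ℂ]

lemma pow_apply_trunc (μ : ℂ) {w : Fin n → ℂ} {d : ℕ} (hd : (Nop B μ ^ d) w = 0)
    {k : ℕ} (hk : d ≤ k) :
    (toEnd B ^ k) w = ∑ j ∈ Finset.range d,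
      (k.choose j : ℂ) • μ ^ (k - j) • ((Nop B μ ^ j) w) := by
  have hzero : ∀ j, d ≤ j → (Nop B μ ^ j) w = 0 := by
    intro j hj
    have : Nop B μ ^ j = Nop B μ ^ (j - d) * Nop B μ ^ d := by
      rw [← pow_add, Nat.sub_add_cancel hj]
    rw [this, Module.End.mul_apply, hd, map_zero]
  have h1 : (toEnd B ^ k) w = ∑ j ∈ Finset.range (k + 1),
      (k.choose j : ℂ) • μ ^ (k - j) • ((Nop B μ ^ j) w) := by
    rw [pow_expand B μ k]
    simp [LinearMap.sum_apply]
  rw [h1]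
  refine (Finset.sum_subset (Finset.range_subset_range.mpr (by omega)) ?_).symm
  intro j hj hj'
  simp only [Finset.mem_range] at hj hj'
  rw [hzero j (by omega), smul_zero, smul_zero]

lemma comp_growth_upper {μ : ℂ} (hμ : μ ≠ 0) (w : Fin n → ℂ) {d : ℕ}
    (hd : (Nop B μ ^ d) w = 0) (hd1 : 1 ≤ d) :
    ∃ C > 0, ∀ k, max d 1 ≤ k → ‖(toEnd B ^ k) w‖ ≤ C * (k : ℝ) ^ (d - 1) * ‖μ‖ ^ k := by
  set c : ℕ → ℝ := fun j => ‖(Nop B μ ^ j) w‖ / ‖μ‖ ^ j with hc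
  refine ⟨(∑ j ∈ Finset.range d, c j) + 1, by positivity, fun k hk => ?_⟩
  have hk1 : 1 ≤ k := le_trans (le_max_right d 1) hk
  have hkd : d ≤ k := le_trans (le_max_left d 1) hk
  rw [pow_apply_trunc B μ hd hkd]
  refine le_trans (norm_sum_le _ _) ?_
  have hterm : ∀ j ∈ Finset.range d,
      ‖(k.choose j : ℂ) • μ ^ (k - j) • ((Nop B μ ^ j) w)‖ ≤ c j * ((k:ℝ) ^ (d-1) * ‖μ‖ ^ k) := by
    intro j hj
    simp only [Finset.mem_range] at hj
    rw [norm_smul, norm_smul, norm_pow]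
    have h1 : ‖(k.choose j : ℂ)‖ = (k.choose j : ℝ) := by
      simp
    rw [h1]
    have h2 : (k.choose j : ℝ) ≤ (k : ℝ) ^ j := by
      exact_mod_cast Nat.choose_le_pow k j
    have h3 : ‖μ‖ ^ (k - j) = ‖μ‖ ^ k / ‖μ‖ ^ j := by
      rw [eq_div_iff (pow_ne_zero j (norm_ne_zero_iff.mpr hμ)), ← pow_add, Nat.sub_add_cancel (by omega)]
    have h4 : (k:ℝ) ^ j ≤ (k:ℝ) ^ (d - 1) :=
      pow_le_pow_right₀ (by exact_mod_cast hk1) (by omega)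
    calc (k.choose j : ℝ) * (‖μ‖ ^ (k-j) * ‖(Nop B μ ^ j) w‖)
        = (k.choose j : ℝ) * ‖μ‖ ^ (k-j) * ‖(Nop B μ ^ j) w‖ := by ring
      _ ≤ (k:ℝ)^j * ‖μ‖ ^ (k-j) * ‖(Nop B μ ^ j) w‖ := by gcongr
      _ = (k:ℝ)^j * (c j * ‖μ‖ ^ k) := by
          rw [h3, hc]
          field_simp
      _ ≤ (k:ℝ)^(d-1) * (c j * ‖μ‖ ^ k) := by
          have hcj : 0 ≤ c j := by positivity
          gcongr
      _ = c j * ((k:ℝ) ^ (d-1) * ‖μ‖ ^ k) := by ring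
  refine le_trans (Finset.sum_le_sum hterm) ?_
  rw [← Finset.sum_mul]
  have h6 : (0:ℝ) ≤ (k:ℝ) ^ (d-1) * ‖μ‖ ^ k := by positivity
  have h7 : (∑ j ∈ Finset.range d, c j) ≤ (∑ j ∈ Finset.range d, c j) + 1 := by linarith
  calc (∑ j ∈ Finset.range d, c j) * ((k:ℝ)^(d-1) * ‖μ‖^k)
      ≤ ((∑ j ∈ Finset.range d, c j) + 1) * ((k:ℝ)^(d-1) * ‖μ‖^k) := by gcongr
    _ = ((∑ j ∈ Finset.range d, c j) + 1) * (k:ℝ)^(d-1) * ‖μ‖^k := by ring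

end SPAux
namespace SPAux

variable {n : ℕ} (B : Matrix (Fin n) (Fin n) ℂ)

private lemma norm_add_lower {m : ℕ} (u r : Fin m → ℂ) : ‖u‖ - ‖r‖ ≤ ‖u + r‖ := by
  have h := norm_sub_le (u + r) r
  simp only [add_sub_cancel_right] at h
  linarith

lemma comp_growth_lower {μ : ℂ} (hμ : μ ≠ 0) {w : Fin n → ℂ} {d : ℕ}
    (hd : (Nop B μ ^ d) w = 0) (hv : (Nop B μ ^ (d - 1)) w ≠ 0) (hd1 : 1 ≤ d) :
    ∃ c > 0, ∃ K : ℕ, ∀ k, K ≤ k → c * (k : ℝ) ^ (d - 1) * ‖μ‖ ^ k ≤ ‖(toEnd B ^ k) w‖ := by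
  have hμn : (0:ℝ) < ‖μ‖ := norm_pos_iff.mpr hμ
  have hμd : (0:ℝ) < ‖μ‖ ^ (d-1) := by positivity
  set v := (Nop B μ ^ (d - 1)) w with hvdef
  have hvn : (0:ℝ) < ‖v‖ := norm_pos_iff.mpr hv
  set a0 : ℝ := ((1:ℝ)/2) ^ (d-1) / (d-1).factorial with ha0
  have ha0pos : 0 < a0 := by positivity
  set a : ℝ := a0 * ‖v‖ / ‖μ‖ ^ (d-1) with ha
  have hapos : 0 < a := by positivity
  set c : ℕ → ℝ := fun j => ‖(Nop B μ ^ j) w‖ / ‖μ‖ ^ j with hc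
  have hcnn : ∀ j, 0 ≤ c j := fun j => by rw [hc]; positivity
  set Cr : ℝ := ∑ j ∈ Finset.range (d-1), c j with hCr
  have hCrnn : 0 ≤ Cr := Finset.sum_nonneg fun j _ => hcnn j
  refine ⟨a/2, by positivity, max (2*d) (⌈2*Cr/a⌉₊ + 1), fun k hk => ?_⟩
  have hk2d : 2*d ≤ k := le_trans (le_max_left _ _) hk
  have hk1 : 1 ≤ k := by omega
  have hkd : d ≤ k := by omega
  have hkr : 2*Cr/a ≤ (k:ℝ) := by
    have h1 : (⌈2*Cr/a⌉₊ + 1 : ℕ) ≤ k := le_trans (le_max_right _ _) hk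
    refine le_trans (Nat.le_ceil _) ?_
    exact_mod_cast Nat.le_of_succ_le h1
  have hkpos : (0:ℝ) < k := by exact_mod_cast hk1
  set X : ℝ := (k:ℝ) ^ (d-1) * ‖μ‖ ^ k with hX
  have hXpos : 0 < X := by rw [hX]; positivity
  have hsplit : (toEnd B ^ k) w =
      ((k.choose (d-1) : ℂ) • μ ^ (k - (d-1)) • v) +
        ∑ j ∈ Finset.range (d-1), (k.choose j : ℂ) • μ ^ (k - j) • ((Nop B μ ^ j) w) := by
    rw [pow_apply_trunc B μ hd hkd]
    have hdd : d = (d-1) + 1 := by omega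
    rw [hdd, Finset.sum_range_succ, ← hdd, add_comm]
  -- lower bound for the top term
  have htop : a * X ≤ ‖(k.choose (d-1) : ℂ) • μ ^ (k - (d-1)) • v‖ := by
    rw [norm_smul, norm_smul]
    have h1 : ‖((k.choose (d-1) : ℕ) : ℂ)‖ = ((k.choose (d-1) : ℕ) : ℝ) := by simp
    have h1b : ‖μ ^ (k - (d-1))‖ = ‖μ‖ ^ (k - (d-1)) := norm_pow _ _
    rw [h1, h1b]
    have hch : a0 * (k:ℝ)^(d-1) ≤ ((k.choose (d-1) : ℕ) : ℝ) := by
      have h2 : (((k + 1 - (d-1) : ℕ)) : ℝ) ^ (d-1) / ((d-1).factorial : ℝ)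
          ≤ ((k.choose (d-1) : ℕ) : ℝ) := by
        exact_mod_cast Nat.pow_le_choose (d-1) k
      refine le_trans ?_ h2
      rw [ha0, div_mul_eq_mul_div, div_le_div_iff_of_pos_right (by positivity)]
      have h3 : (k:ℝ)/2 ≤ ((k + 1 - (d-1) : ℕ) : ℝ) := by
        have h4 : k ≤ 2 * (k + 1 - (d-1)) := by omega
        have h5 := (Nat.cast_le (α := ℝ)).mpr h4
        push_cast at h5 ⊢
        linarith
      calc ((1:ℝ)/2)^(d-1) * (k:ℝ)^(d-1) = ((k:ℝ)/2)^(d-1) := by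
            rw [← mul_pow]; ring_nf
        _ ≤ (((k + 1 - (d-1) : ℕ)) : ℝ)^(d-1) := pow_le_pow_left₀ (by positivity) h3 _
    have hpj : ‖μ‖^(k-(d-1)) * ‖μ‖^(d-1) = ‖μ‖^k := by
      rw [← pow_add, Nat.sub_add_cancel (by omega)]
    rw [← mul_le_mul_iff_left₀ hμd]
    have e1 : a * X * ‖μ‖^(d-1) = (a0 * (k:ℝ)^(d-1)) * (‖μ‖^k * ‖v‖) := by
      calc a * X * ‖μ‖^(d-1) = a * ‖μ‖^(d-1) * X := by ring
        _ = a0 * ‖v‖ * X := by rw [ha, div_mul_cancel₀ _ (ne_of_gt hμd)]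
        _ = (a0 * (k:ℝ)^(d-1)) * (‖μ‖^k * ‖v‖) := by rw [hX]; ring
    have e2 : ((k.choose (d-1):ℕ):ℝ) * (‖μ‖ ^ (k-(d-1)) * ‖v‖) * ‖μ‖^(d-1)
        = ((k.choose (d-1):ℕ):ℝ) * (‖μ‖^k * ‖v‖) := by
      rw [← hpj]; ring
    rw [e1, e2]
    exact mul_le_mul_of_nonneg_right hch (by positivity)
  -- upper bound for the rest
  have hrest : ‖∑ j ∈ Finset.range (d-1), (k.choose j : ℂ) • μ ^ (k - j) • ((Nop B μ ^ j) w)‖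
      ≤ (Cr / k) * X := by
    refine le_trans (norm_sum_le _ _) ?_
    have hterm : ∀ j ∈ Finset.range (d-1),
        ‖(k.choose j : ℂ) • μ ^ (k - j) • ((Nop B μ ^ j) w)‖ ≤ c j / k * X := by
      intro j hj
      simp only [Finset.mem_range] at hj
      rw [norm_smul, norm_smul]
      have h1 : ‖((k.choose j : ℕ) : ℂ)‖ = ((k.choose j : ℕ) : ℝ) := by simp
      have h1b : ‖μ ^ (k - j)‖ = ‖μ‖ ^ (k - j) := norm_pow _ _
      rw [h1, h1b]
      have h2 : ((k.choose j : ℕ) : ℝ) ≤ (k : ℝ) ^ j := by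
        exact_mod_cast Nat.choose_le_pow k j
      have h4 : (k:ℝ) ^ j * (k:ℝ) ≤ (k:ℝ) ^ (d-1) := by
        calc (k:ℝ)^j * (k:ℝ) = (k:ℝ)^(j+1) := by ring
          _ ≤ (k:ℝ)^(d-1) := pow_le_pow_right₀ (by exact_mod_cast hk1) (by omega)
      have hμjk : (0:ℝ) < ‖μ‖ ^ j * k := by positivity
      rw [← mul_le_mul_iff_left₀ hμjk]
      have hpj : ‖μ‖^(k-j) * ‖μ‖^j = ‖μ‖^k := by
        rw [← pow_add, Nat.sub_add_cancel (by omega)]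
      have e1 : ((k.choose j:ℕ):ℝ) * (‖μ‖^(k-j) * ‖(Nop B μ ^ j) w‖) * (‖μ‖^j * k)
          = (((k.choose j:ℕ):ℝ) * k) * (‖μ‖^k * ‖(Nop B μ ^ j) w‖) := by
        rw [← hpj]; ring
      have hcj : c j * ‖μ‖^j = ‖(Nop B μ ^ j) w‖ := by
        simp only [hc]
        exact div_mul_cancel₀ _ (by positivity)
      have e2 : c j / k * X * (‖μ‖^j * k) = (k:ℝ)^(d-1) * (‖μ‖^k * ‖(Nop B μ ^ j) w‖) := by
        calc c j / k * X * (‖μ‖^j * k) = (c j * ‖μ‖^j) * ((k:ℝ)/k) * X := by ring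
          _ = ‖(Nop B μ ^ j) w‖ * 1 * X := by rw [hcj, div_self (ne_of_gt hkpos)]
          _ = (k:ℝ)^(d-1) * (‖μ‖^k * ‖(Nop B μ ^ j) w‖) := by rw [hX]; ring
      rw [e1, e2]
      refine mul_le_mul_of_nonneg_right ?_ (by positivity)
      calc ((k.choose j:ℕ):ℝ) * k ≤ (k:ℝ)^j * k :=
            mul_le_mul_of_nonneg_right h2 (by positivity)
        _ ≤ (k:ℝ)^(d-1) := h4
    refine le_trans (Finset.sum_le_sum hterm) (le_of_eq ?_)
    rw [hCr, Finset.sum_div, Finset.sum_mul]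
  -- combine
  have hCrk : Cr / k ≤ a / 2 := by
    rw [div_le_iff₀ hkpos]
    rw [div_le_iff₀ hapos] at hkr
    linarith
  have hlow := norm_add_lower ((k.choose (d-1) : ℂ) • μ ^ (k - (d-1)) • v)
    (∑ j ∈ Finset.range (d-1), (k.choose j : ℂ) • μ ^ (k - j) • ((Nop B μ ^ j) w))
  rw [← hsplit] at hlow
  have hr2 : (Cr/k) * X ≤ (a/2) * X := mul_le_mul_of_nonneg_right hCrk (le_of_lt hXpos)
  calc a/2 * (k:ℝ)^(d-1) * ‖μ‖^k = a * X - a/2 * X := by rw [hX]; ring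
    _ ≤ ‖(toEnd B ^ k) w‖ := by linarith
end SPAux
namespace SPAux

open Filter Topology

variable {n : ℕ} (B : Matrix (Fin n) (Fin n) ℂ)

private lemma pow_apply_zero_of_le {V : Type*} [AddCommGroup V] [Module ℂ V]
    {f : Module.End ℂ V} {w : V} {d k : ℕ} (hd : (f ^ d) w = 0) (hk : d ≤ k) :
    (f ^ k) w = 0 := by
  have h : f ^ k = f ^ (k - d) * f ^ d := by rw [← pow_add, Nat.sub_add_cancel hk]
  rw [h, Module.End.mul_apply, hd, map_zero]

lemma Nop_zero : Nop B 0 = toEnd B := by simp [Nop]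

/-- continuous version of the spectral projection -/
noncomputable def Pc (μ : ℂ) : (Fin n → ℂ) →L[ℂ] (Fin n → ℂ) :=
  LinearMap.toContinuousLinearMap (P B μ)

lemma Pc_apply (μ : ℂ) (x : Fin n → ℂ) : Pc B μ x = P B μ x := rfl

/-- Per-component upper bound against the global pair `(ρ, m)`. -/
lemma comp_growth_upper_vs {μ : ℂ} {ρ : ℝ} {m : ℕ} (hm : 1 ≤ m) (hρ : 0 ≤ ρ)
    (w : Fin n → ℂ) {d : ℕ} (hd : (Nop B μ ^ d) w = 0) (hd1 : 1 ≤ d)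
    (hμρ : ‖μ‖ ≤ ρ) (hcase : ‖μ‖ = ρ → d ≤ m) :
    ∃ C, 0 < C ∧ ∃ K : ℕ, ∀ k, K ≤ k →
      ‖(toEnd B ^ k) w‖ ≤ C * (k : ℝ) ^ (m - 1) * ρ ^ k := by
  rcases eq_or_ne μ 0 with rfl | hμ
  · -- component at eigenvalue 0 dies
    refine ⟨1, one_pos, max d 1, fun k hk => ?_⟩
    have h0 : (toEnd B ^ k) w = 0 := by
      rw [← Nop_zero B]
      exact pow_apply_zero_of_le hd (le_trans (le_max_left _ _) hk)
    rw [h0, norm_zero]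
    have hk1 : 1 ≤ k := le_trans (le_max_right _ _) hk
    have : (0:ℝ) ≤ (k:ℝ) ^ (m-1) * ρ ^ k := by positivity
    linarith
  · obtain ⟨C0, hC0, hup⟩ := comp_growth_upper B hμ w hd hd1
    rcases eq_or_lt_of_le hμρ with heq | hlt
    · -- maximal modulus
      refine ⟨C0, hC0, max d 1, fun k hk => ?_⟩
      have hk1 : 1 ≤ k := le_trans (le_max_right _ _) hk
      have hdm : d ≤ m := hcase heq
      refine le_trans (hup k hk) ?_
      rw [← heq]
      have h1 : (k:ℝ) ^ (d-1) ≤ (k:ℝ) ^ (m-1) :=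
        pow_le_pow_right₀ (by exact_mod_cast hk1) (by omega)
      have h2 : (0:ℝ) ≤ ‖μ‖ ^ k := by positivity
      have h3 : (0:ℝ) ≤ C0 := le_of_lt hC0
      calc C0 * (k:ℝ)^(d-1) * ‖μ‖^k ≤ C0 * (k:ℝ)^(m-1) * ‖μ‖^k := by
            gcongr
        _ = C0 * (k:ℝ)^(m-1) * ‖μ‖^k := rfl
    · -- strictly smaller modulus
      have hρpos : 0 < ρ := lt_of_le_of_lt (norm_nonneg μ) hlt
      set r : ℝ := ‖μ‖ / ρ with hr
      have hr0 : 0 ≤ r := by positivity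
      have hr1 : r < 1 := (div_lt_one hρpos).mpr hlt
      have htend : Tendsto (fun k : ℕ => C0 * ((k:ℝ) ^ (d-1) * r ^ k)) atTop (nhds 0) := by
        have := tendsto_pow_const_mul_const_pow_of_lt_one (d-1) hr0 hr1
        simpa using this.const_mul C0
      have hev : ∀ᶠ k : ℕ in atTop, C0 * ((k:ℝ) ^ (d-1) * r ^ k) ≤ 1 := by
        refine (htend.eventually (eventually_le_nhds one_pos)).mono fun k hk => hk
      obtain ⟨K0, hK0⟩ := eventually_atTop.mp hev
      refine ⟨1, one_pos, max (max d 1) K0, fun k hk => ?_⟩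
      have hk1 : 1 ≤ k := le_trans (le_trans (le_max_right d 1) (le_max_left _ _)) hk
      have hkd : max d 1 ≤ k := le_trans (le_max_left _ _) hk
      have hkK0 : K0 ≤ k := le_trans (le_max_right _ _) hk
      refine le_trans (hup k hkd) ?_
      have hμk : ‖μ‖ ^ k = r ^ k * ρ ^ k := by
        rw [hr, div_pow, div_mul_cancel₀]
        positivity
      have h5 : C0 * (k:ℝ)^(d-1) * ‖μ‖^k = (C0 * ((k:ℝ)^(d-1) * r^k)) * ρ^k := by
        rw [hμk]; ring
      rw [h5]
      have h6 : (1:ℝ) ≤ (k:ℝ)^(m-1) := one_le_pow₀ (by exact_mod_cast hk1)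
      calc (C0 * ((k:ℝ)^(d-1) * r^k)) * ρ^k ≤ 1 * ρ^k := by
            have := hK0 k hkK0
            gcongr
        _ ≤ 1 * ((k:ℝ)^(m-1) * ρ^k) := by
            rw [one_mul, one_mul]
            nlinarith [pow_pos hρpos k]
        _ = 1 * (k:ℝ)^(m-1) * ρ^k := by ring

/-- Global upper growth bound. -/
lemma growth_upper {x : Fin n → ℂ} (hx : x ≠ 0) :
    ∃ C, 0 < C ∧ ∃ K : ℕ, ∀ k, K ≤ k →
      ‖(toEnd B ^ k) x‖ ≤ C * (k : ℝ) ^ (ordOf B x - 1) * locRad B x ^ k := by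
  set ρ := locRad B x with hρdef
  set m := ordOf B x with hmdef
  have hm : 1 ≤ m := ordOf_pos B hx
  have hρ : 0 ≤ ρ := locRad_nonneg B hx
  obtain ⟨s, hs, hsum⟩ := eq_sum_P B x
  have hcomp : ∀ μ : {μ // μ ∈ s}, ∃ C, 0 < C ∧ ∃ K : ℕ, ∀ k, K ≤ k →
      ‖(toEnd B ^ k) (P B μ.1 x)‖ ≤ C * (k : ℝ) ^ (m - 1) * ρ ^ k := by
    rintro ⟨μ, hμ⟩
    have hP : P B μ x ≠ 0 := hs μ hμ
    refine comp_growth_upper_vs B hm hρ (P B μ x) (compOrd_mem B μ x) (compOrd_pos B hP)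
      ((locRad_spec B hx).2 μ hP) (fun h => ?_)
    exact (ordOf_spec B hx).2 μ hP h
  choose C hC K hK using hcomp
  have hCnn : 0 ≤ ∑ μ ∈ s.attach, C μ := Finset.sum_nonneg fun μ _ => (hC μ).le
  refine ⟨(∑ μ ∈ s.attach, C μ) + 1, by linarith, s.attach.sup K, fun k hk => ?_⟩
  have hb : ‖(toEnd B ^ k) x‖ ≤ ∑ μ ∈ s.attach, ‖(toEnd B ^ k) (P B μ.1 x)‖ := by
    conv_lhs => rw [hsum]
    rw [← Finset.sum_attach s (fun μ => P B μ x), map_sum]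
    exact norm_sum_le _ _
  refine le_trans hb ?_
  have hterm : ∀ μ ∈ s.attach, ‖(toEnd B ^ k) (P B μ.1 x)‖ ≤ C μ * (k:ℝ)^(m-1) * ρ^k :=
    fun μ _ => hK μ k (le_trans (Finset.le_sup (Finset.mem_attach s μ)) hk)
  refine le_trans (Finset.sum_le_sum hterm) ?_
  have h1 : ∑ μ ∈ s.attach, C μ * (k:ℝ)^(m-1) * ρ^k
      = (∑ μ ∈ s.attach, C μ) * ((k:ℝ)^(m-1) * ρ^k) := by
    rw [Finset.sum_mul]
    exact Finset.sum_congr rfl fun μ _ => by ring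
  rw [h1]
  have h2 : (0:ℝ) ≤ (k:ℝ)^(m-1) * ρ^k := by positivity
  calc (∑ μ ∈ s.attach, C μ) * ((k:ℝ)^(m-1) * ρ^k)
      ≤ ((∑ μ ∈ s.attach, C μ) + 1) * ((k:ℝ)^(m-1) * ρ^k) := by nlinarith
    _ = ((∑ μ ∈ s.attach, C μ) + 1) * (k:ℝ)^(m-1) * ρ^k := by ring

/-- Global lower growth bound. -/
lemma growth_lower {x : Fin n → ℂ} (hx : x ≠ 0) :
    ∃ c, 0 < c ∧ ∃ K : ℕ, ∀ k, K ≤ k →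
      c * (k : ℝ) ^ (ordOf B x - 1) * locRad B x ^ k ≤ ‖(toEnd B ^ k) x‖ := by
  set ρ := locRad B x with hρdef
  set m := ordOf B x with hmdef
  rcases eq_or_lt_of_le (locRad_nonneg B hx) with hρ0 | hρpos
  · refine ⟨1, one_pos, 1, fun k hk => ?_⟩
    have hρ00 : ρ = 0 := hρdef.trans hρ0.symm
    rw [hρ00, zero_pow (by omega : k ≠ 0), mul_zero]
    positivity
  · obtain ⟨⟨μ1, hP1, hμ1, hord⟩, _⟩ := ordOf_spec B hx
    have hμ1ne : μ1 ≠ 0 := by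
      intro h
      rw [h] at hμ1
      simp only [norm_zero] at hμ1
      rw [← hμ1] at hρpos
      exact lt_irrefl _ hρpos
    have hd : (Nop B μ1 ^ m) (P B μ1 x) = 0 := by
      rw [hmdef, hord]; exact compOrd_mem B μ1 x
    have hm1 : 1 ≤ m := ordOf_pos B hx
    have hv : (Nop B μ1 ^ (m - 1)) (P B μ1 x) ≠ 0 := by
      refine compOrd_min B ?_
      rw [← hord]
      omega
    obtain ⟨c, hc, K, hlow⟩ := comp_growth_lower B hμ1ne hd hv hm1
    set Q : ℝ := ‖Pc B μ1‖ + 1 with hQ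
    have hQpos : 0 < Q := by positivity
    refine ⟨c / Q, by positivity, K, fun k hk => ?_⟩
    have h1 := hlow k hk
    rw [hμ1] at h1
    have h2 : ‖(toEnd B ^ k) (P B μ1 x)‖ ≤ Q * ‖(toEnd B ^ k) x‖ := by
      rw [← P_comm_T_pow]
      calc ‖P B μ1 ((toEnd B ^ k) x)‖ = ‖Pc B μ1 ((toEnd B ^ k) x)‖ := rfl
        _ ≤ ‖Pc B μ1‖ * ‖(toEnd B ^ k) x‖ := ContinuousLinearMap.le_opNorm _ _
        _ ≤ Q * ‖(toEnd B ^ k) x‖ := by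
            have hn1 := norm_nonneg ((toEnd B ^ k) x)
            have hn2 := norm_nonneg (Pc B μ1)
            nlinarith
    rw [div_mul_eq_mul_div, div_mul_eq_mul_div, div_le_iff₀ hQpos]
    calc c * (k:ℝ)^(m-1) * ρ^k ≤ ‖(toEnd B ^ k) (P B μ1 x)‖ := h1
      _ ≤ Q * ‖(toEnd B ^ k) x‖ := h2
      _ = ‖(toEnd B ^ k) x‖ * Q := by ring

/-- When the local spectral radius vanishes: vanishing powers characterization. -/
lemma growth_zero {x : Fin n → ℂ} (hx : x ≠ 0) (hρ : locRad B x = 0) :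
    ∀ k : ℕ, ((toEnd B ^ k) x = 0 ↔ ordOf B x ≤ k) := by
  have hx0 : x = P B 0 x := by
    obtain ⟨s, hs, hsum⟩ := eq_sum_P B x
    have hall : ∀ μ ∈ s, μ = 0 := by
      intro μ hμ
      have h1 := (locRad_spec B hx).2 μ (hs μ hμ)
      rw [hρ] at h1
      exact norm_eq_zero.mp (le_antisymm h1 (norm_nonneg μ))
    rcases Finset.subset_singleton_iff.mp (fun μ hμ => Finset.mem_singleton.mpr (hall μ hμ)) with
      h0 | h0
    · rw [h0] at hsum; simp at hsum; exact absurd hsum hx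
    · rw [h0] at hsum
      rw [Finset.sum_singleton] at hsum
      exact hsum
  obtain ⟨⟨μ1, hP1, hμ1, hord⟩, _⟩ := ordOf_spec B hx
  have hμ10 : μ1 = 0 := by
    rw [hρ] at hμ1
    exact norm_eq_zero.mp hμ1
  rw [hμ10] at hord
  intro k
  constructor
  · intro h
    by_contra hlt
    push_neg at hlt
    have := compOrd_min B (μ := 0) (x := x) (k := k) (by omega)
    rw [show (toEnd B - (0:ℂ) • (1 : Module.End ℂ (Fin n → ℂ))) = toEnd B by simp,
      ← hx0] at this
    exact this h
  · intro h
    have h1 : (toEnd B ^ (ordOf B x)) x = 0 := by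
      have := compOrd_mem B 0 x
      rw [show (toEnd B - (0:ℂ) • (1 : Module.End ℂ (Fin n → ℂ))) = toEnd B by simp,
        ← hx0, ← hord] at this
      exact this
    exact pow_apply_zero_of_le h1 h
end SPAux
namespace SPAux

open Filter Topology

variable {n : ℕ} (B : Matrix (Fin n) (Fin n) ℂ)

/-- No sequence domination is possible against a lexicographically smaller growth scale. -/
lemma no_dom {e f : ℕ} {a b cl cu : ℝ} (ha : 0 < a) (hb : 0 ≤ b) (hcl : 0 < cl)
    (hcu : 0 < cu) (hab : b < a ∨ (b = a ∧ f < e)) (K : ℕ)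
    (hyp : ∀ k, K ≤ k → cl * (k:ℝ)^e * a^k ≤ cu * (k:ℝ)^f * b^k) : False := by
  rcases hab with hba | ⟨heq, hfe⟩
  · set r : ℝ := b / a with hr
    have hr0 : 0 ≤ r := by positivity
    have hr1 : r < 1 := (div_lt_one ha).mpr hba
    have htend : Tendsto (fun k : ℕ => cu * ((k:ℝ) ^ f * r ^ k)) atTop (nhds 0) := by
      have := tendsto_pow_const_mul_const_pow_of_lt_one f hr0 hr1
      simpa using this.const_mul cu
    have hev : ∀ᶠ k : ℕ in atTop, cu * ((k:ℝ) ^ f * r ^ k) < cl :=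
      htend.eventually (eventually_lt_nhds hcl)
    obtain ⟨K0, hK0⟩ := eventually_atTop.mp hev
    set k := max (max K 1) K0 with hkdef
    have hkK : K ≤ k := le_trans (le_max_left _ _) (le_max_left _ _)
    have hk1 : 1 ≤ k := le_trans (le_max_right _ _) (le_max_left _ _)
    have hkK0 : K0 ≤ k := le_max_right _ _
    have h1 := hyp k hkK
    have hbk : b ^ k = r ^ k * a ^ k := by
      rw [hr, div_pow, div_mul_cancel₀]
      positivity
    have hak : (0:ℝ) < a ^ k := pow_pos ha k
    have h2 : cl * (k:ℝ)^e ≤ cu * ((k:ℝ)^f * r^k) := by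
      rw [← mul_le_mul_iff_left₀ hak]
      calc cl * (k:ℝ)^e * a^k ≤ cu * (k:ℝ)^f * b^k := h1
        _ = cu * ((k:ℝ)^f * r^k) * a^k := by rw [hbk]; ring
    have h3 : cl ≤ cl * (k:ℝ)^e := by
      have h4 : (1:ℝ) ≤ (k:ℝ)^e := one_le_pow₀ (by exact_mod_cast hk1)
      nlinarith
    have h5 := hK0 k hkK0
    linarith
  · subst heq
    set k := max K (⌈cu/cl⌉₊ + 1) with hkdef
    have hkK : K ≤ k := le_max_left _ _
    have hk1 : 1 ≤ k := by
      refine le_trans ?_ (le_max_right _ _)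
      omega
    have hkc : cu / cl < (k:ℝ) := by
      have h1 : (⌈cu/cl⌉₊ + 1 : ℕ) ≤ k := le_max_right _ _
      have h2 : cu/cl ≤ (⌈cu/cl⌉₊ : ℝ) := Nat.le_ceil _
      have h3 : ((⌈cu/cl⌉₊ : ℕ) : ℝ) + 1 ≤ (k:ℝ) := by exact_mod_cast h1
      linarith
    have h1 := hyp k hkK
    have hak : (0:ℝ) < b ^ k := pow_pos ha k
    have h2 : cl * (k:ℝ)^e ≤ cu * (k:ℝ)^f := by
      rw [← mul_le_mul_iff_left₀ hak]
      exact h1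
    have hke : (k:ℝ)^f * (k:ℝ) ≤ (k:ℝ)^e := by
      calc (k:ℝ)^f * (k:ℝ) = (k:ℝ)^(f+1) := by ring
        _ ≤ (k:ℝ)^e := pow_le_pow_right₀ (by exact_mod_cast hk1) (by omega)
    have hkf : (0:ℝ) < (k:ℝ)^f := by
      have : (0:ℝ) < (k:ℝ) := by exact_mod_cast hk1
      positivity
    have h3 : cl * ((k:ℝ)^f * (k:ℝ)) ≤ cu * (k:ℝ)^f := by
      refine le_trans ?_ h2
      have := mul_le_mul_of_nonneg_left hke (le_of_lt hcl)
      linarith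
    have h4 : cl * (k:ℝ) ≤ cu := by
      have h5 : cl * (k:ℝ) * (k:ℝ)^f ≤ cu * (k:ℝ)^f := by
        calc cl * (k:ℝ) * (k:ℝ)^f = cl * ((k:ℝ)^f * (k:ℝ)) := by ring
          _ ≤ cu * (k:ℝ)^f := h3
      exact le_of_mul_le_mul_right h5 hkf
    rw [div_lt_iff₀ hcl] at hkc
    linarith

lemma ordOf_zero : ordOf B 0 = 0 := by
  have h : {k : ℕ | ∃ μ, HasComp B μ (0 : Fin n → ℂ) ∧ ‖μ‖ = locRad B 0 ∧ k = compOrd B μ 0}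
      = (∅ : Set ℕ) := by
    ext k
    simp only [Set.mem_setOf_eq, Set.mem_empty_iff_false, iff_false, not_exists]
    rintro μ ⟨h1, _⟩
    exact h1 (zero_mem _)
  rw [ordOf, h, csSup_empty]
  rfl

lemma specPair_def (x : Fin n → ℂ) : specPair B x = (locRad B x, (ordOf B x : ℝ)) := rfl

lemma lexLe_refl (p : ℝ × ℝ) : lexLe p p := Or.inr ⟨rfl, le_refl _⟩

lemma lexLe_total (p q : ℝ × ℝ) : lexLe p q ∨ lexLe q p := by
  rcases lt_trichotomy p.1 q.1 with h | h | h
  · exact Or.inl (Or.inl h)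
  · rcases le_total p.2 q.2 with h2 | h2
    · exact Or.inl (Or.inr ⟨h, h2⟩)
    · exact Or.inr (Or.inr ⟨h.symm, h2⟩)
  · exact Or.inr (Or.inl h)

lemma lexLe_antisymm {p q : ℝ × ℝ} (h1 : lexLe p q) (h2 : lexLe q p) : p = q := by
  rcases h1 with h1 | ⟨h1a, h1b⟩ <;> rcases h2 with h2 | ⟨h2a, h2b⟩
  · exact absurd h2 (lt_asymm h1)
  · exact absurd h2a (ne_of_lt h1).symm
  · exact absurd h1a (ne_of_lt h2).symm
  · exact Prod.ext h1a (le_antisymm h1b h2b)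

lemma lexLe_zero_left (z : Fin n → ℂ) : lexLe (specPair B 0) (specPair B z) := by
  rw [specPair_def, specPair_def, locRad_zero, ordOf_zero]
  rcases eq_or_ne z 0 with rfl | hz
  · rw [locRad_zero, ordOf_zero]
    exact lexLe_refl _
  · rcases eq_or_lt_of_le (locRad_nonneg B hz) with h | h
    · refine Or.inr ⟨h, ?_⟩
      simp
    · exact Or.inl h

/-- Comparison via norm domination of the iterates. -/
lemma lexLe_of_dominated {x z : Fin n → ℂ} {c : ℝ} (hc : 0 ≤ c)
    (hdom : ∀ k : ℕ, ‖(toEnd B ^ k) x‖ ≤ c * ‖(toEnd B ^ k) z‖) :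
    lexLe (specPair B x) (specPair B z) := by
  rcases eq_or_ne x 0 with rfl | hx
  · exact lexLe_zero_left B z
  have hz : z ≠ 0 := by
    rintro rfl
    have h0 := hdom 0
    simp only [pow_zero, Module.End.one_apply, map_zero, norm_zero, mul_zero] at h0
    exact hx (norm_le_zero_iff.mp h0)
  by_contra hcon
  have hkey : locRad B z < locRad B x ∨
      (locRad B z = locRad B x ∧ ordOf B z < ordOf B x) := by
    rw [specPair_def, specPair_def, lexLe] at hcon
    push_neg at hcon
    obtain ⟨hc1, hc2⟩ := hcon
    simp only at hc1 hc2
    rcases eq_or_lt_of_le hc1 with h | h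
    · refine Or.inr ⟨h, ?_⟩
      have := hc2 h.symm
      exact_mod_cast this
    · exact Or.inl h
  rcases eq_or_lt_of_le (locRad_nonneg B hx) with hρx0 | hρx0
  · -- locRad x = 0 forces locRad z = 0 and order comparison
    have hρz0 : locRad B z = 0 := by
      rcases hkey with h | ⟨h, _⟩
      · exact absurd (lt_of_lt_of_le h (le_of_eq hρx0.symm)) (not_lt.mpr (locRad_nonneg B hz))
      · rw [h, ← hρx0]
    have hmzx : ordOf B z < ordOf B x := by
      rcases hkey with h | ⟨_, h⟩
      · rw [hρz0, ← hρx0] at h; exact absurd h (lt_irrefl 0)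
      · exact h
    have hz0 := (growth_zero B hz hρz0 (ordOf B z)).mpr (le_refl _)
    have hx0 : (toEnd B ^ (ordOf B z)) x = 0 := by
      have := hdom (ordOf B z)
      rw [hz0, norm_zero, mul_zero] at this
      exact norm_le_zero_iff.mp this
    have := (growth_zero B hx hρx0.symm (ordOf B z)).mp hx0
    omega
  · -- locRad x > 0
    obtain ⟨cl, hcl, K1, hlow⟩ := growth_lower B hx
    obtain ⟨Cu, hCu, K2, hup⟩ := growth_upper B hz
    have hmx : 1 ≤ ordOf B x := ordOf_pos B hx
    have hmz : 1 ≤ ordOf B z := ordOf_pos B hz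
    have hab : locRad B z < locRad B x ∨
        (locRad B z = locRad B x ∧ ordOf B z - 1 < ordOf B x - 1) := by
      rcases hkey with h | ⟨h1, h2⟩
      · exact Or.inl h
      · exact Or.inr ⟨h1, by omega⟩
    refine no_dom hρx0 (locRad_nonneg B hz) hcl
      (mul_pos (by linarith : (0:ℝ) < c + 1) hCu) hab (max K1 K2) (fun k hk => ?_)
    calc cl * (k:ℝ)^(ordOf B x - 1) * locRad B x ^ k
        ≤ ‖(toEnd B ^ k) x‖ := hlow k (le_trans (le_max_left _ _) hk)
      _ ≤ c * ‖(toEnd B ^ k) z‖ := hdom k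
      _ ≤ (c+1) * (Cu * (k:ℝ)^(ordOf B z - 1) * locRad B z ^ k) := by
          have h1 := hup k (le_trans (le_max_right _ _) hk)
          have h2 : (0:ℝ) ≤ ‖(toEnd B ^ k) z‖ := norm_nonneg _
          nlinarith
      _ = (c+1) * Cu * (k:ℝ)^(ordOf B z - 1) * locRad B z ^ k := by ring

end SPAux
namespace SPAux

open Filter Topology

variable {n : ℕ} (B : Matrix (Fin n) (Fin n) ℂ)

lemma lexLe_sum {x y : Fin n → ℂ} (hxy : lexLe (specPair B x) (specPair B y)) :
    lexLe (specPair B (x + y)) (specPair B y) := by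
  rcases eq_or_ne (x + y) 0 with hz0 | hzne
  · rw [hz0]
    exact lexLe_zero_left B y
  rcases eq_or_ne x 0 with rfl | hxne
  · rw [zero_add]
    exact lexLe_refl _
  have hyne : y ≠ 0 := by
    rintro rfl
    rw [specPair_def, specPair_def, locRad_zero, ordOf_zero] at hxy
    rcases hxy with h | ⟨h1, h2⟩
    · exact absurd h (not_lt.mpr (locRad_nonneg B hxne))
    · have hm := ordOf_pos B hxne
      have h3 : (1:ℝ) ≤ (ordOf B x : ℝ) := by exact_mod_cast hm
      simp only [Nat.cast_zero] at h2
      linarith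
  -- extract the numeric content of hxy
  have hxy' : locRad B x < locRad B y ∨
      (locRad B x = locRad B y ∧ ordOf B x ≤ ordOf B y) := by
    rw [specPair_def, specPair_def] at hxy
    rcases hxy with h | ⟨h1, h2⟩
    · exact Or.inl h
    · refine Or.inr ⟨h1, ?_⟩
      have h2' : (ordOf B x : ℝ) ≤ (ordOf B y : ℝ) := h2
      exact_mod_cast h2'
  by_contra hcon
  have hkey : locRad B y < locRad B (x + y) ∨
      (locRad B y = locRad B (x + y) ∧ ordOf B y < ordOf B (x + y)) := by
    rw [specPair_def, specPair_def, lexLe] at hcon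
    push_neg at hcon
    obtain ⟨hc1, hc2⟩ := hcon
    simp only at hc1 hc2
    rcases eq_or_lt_of_le hc1 with h | h
    · refine Or.inr ⟨h, ?_⟩
      have := hc2 h.symm
      exact_mod_cast this
    · exact Or.inl h
  have hmx : 1 ≤ ordOf B x := ordOf_pos B hxne
  have hmy : 1 ≤ ordOf B y := ordOf_pos B hyne
  have hmz : 1 ≤ ordOf B (x + y) := ordOf_pos B hzne
  have hadd : ∀ k : ℕ, (toEnd B ^ k) (x + y) = (toEnd B ^ k) x + (toEnd B ^ k) y :=
    fun k => map_add _ _ _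
  rcases eq_or_lt_of_le (locRad_nonneg B hzne) with hρz0 | hρzpos
  · -- locRad (x+y) = 0
    have hρy0 : locRad B y = 0 := by
      rcases hkey with h | ⟨h, _⟩
      · exact absurd (lt_of_lt_of_le h (le_of_eq hρz0.symm))
          (not_lt.mpr (locRad_nonneg B hyne))
      · rw [h, ← hρz0]
    have hmyz : ordOf B y < ordOf B (x + y) := by
      rcases hkey with h | ⟨_, h⟩
      · rw [hρy0, ← hρz0] at h; exact absurd h (lt_irrefl 0)
      · exact h
    have hρx0 : locRad B x = 0 ∧ ordOf B x ≤ ordOf B y := by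
      rcases hxy' with h | ⟨h1, h2⟩
      · rw [hρy0] at h
        exact absurd h (not_lt.mpr (locRad_nonneg B hxne))
      · exact ⟨h1.trans hρy0, h2⟩
    have hx0 := (growth_zero B hxne hρx0.1 (ordOf B y)).mpr hρx0.2
    have hy0 := (growth_zero B hyne hρy0 (ordOf B y)).mpr (le_refl _)
    have hz0 : (toEnd B ^ (ordOf B y)) (x + y) = 0 := by
      rw [hadd, hx0, hy0, add_zero]
    have := (growth_zero B hzne hρz0.symm (ordOf B y)).mp hz0
    omega
  · -- locRad (x+y) > 0
    obtain ⟨cl, hcl, K1, hlow⟩ := growth_lower B hzne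
    rcases eq_or_lt_of_le (locRad_nonneg B hyne) with hρy0 | hρypos
    · -- locRad y = 0 (hence also x): powers die, contradicting positive lower bound
      have hρx0 : locRad B x = 0 ∧ ordOf B x ≤ ordOf B y := by
        rcases hxy' with h | ⟨h1, h2⟩
        · rw [← hρy0] at h
          exact absurd h (not_lt.mpr (locRad_nonneg B hxne))
        · exact ⟨h1.trans hρy0.symm, h2⟩
      set k := max K1 (max (ordOf B x) (max (ordOf B y) 1)) with hkdef
      have hk1 : 1 ≤ k := by omega
      have hx0 := (growth_zero B hxne hρx0.1 k).mpr (by omega)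
      have hy0 := (growth_zero B hyne hρy0.symm k).mpr (by omega)
      have hz0 : (toEnd B ^ k) (x + y) = 0 := by rw [hadd, hx0, hy0, add_zero]
      have h1 := hlow k (by omega)
      rw [hz0, norm_zero] at h1
      have h2 : (0:ℝ) < cl * (k:ℝ)^(ordOf B (x+y) - 1) * locRad B (x+y) ^ k := by
        have hkpos : (0:ℝ) < (k:ℝ) := by exact_mod_cast hk1
        positivity
      linarith
    · -- locRad y > 0
      obtain ⟨Cx, hCx, K2, hupx⟩ := growth_upper B hxne
      obtain ⟨Cy, hCy, K3, hupy⟩ := growth_upper B hyne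
      -- bound the x-term by the y-scale
      have hxterm : ∃ K4 : ℕ, ∀ k, K4 ≤ k →
          Cx * (k:ℝ)^(ordOf B x - 1) * locRad B x ^ k
            ≤ (Cx + 1) * (k:ℝ)^(ordOf B y - 1) * locRad B y ^ k := by
        rcases hxy' with h | ⟨h1, h2⟩
        · set r : ℝ := locRad B x / locRad B y with hr
          have hr0 : 0 ≤ r := by
            rw [hr]
            have := locRad_nonneg B hxne
            positivity
          have hr1 : r < 1 := (div_lt_one hρypos).mpr h
          have htend : Tendsto (fun k : ℕ =>
              Cx * ((k:ℝ) ^ (ordOf B x - 1) * r ^ k)) atTop (nhds 0) := by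
            have := tendsto_pow_const_mul_const_pow_of_lt_one (ordOf B x - 1) hr0 hr1
            simpa using this.const_mul Cx
          have hev : ∀ᶠ k : ℕ in atTop, Cx * ((k:ℝ) ^ (ordOf B x - 1) * r ^ k) ≤ 1 :=
            htend.eventually (eventually_le_nhds one_pos)
          obtain ⟨K4, hK4⟩ := eventually_atTop.mp hev
          refine ⟨max K4 1, fun k hk => ?_⟩
          have hk1 : 1 ≤ k := le_trans (le_max_right _ _) hk
          have hρxk : locRad B x ^ k = r ^ k * locRad B y ^ k := by
            rw [hr, div_pow, div_mul_cancel₀]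
            positivity
          have h5 : Cx * (k:ℝ)^(ordOf B x - 1) * locRad B x ^ k
              = (Cx * ((k:ℝ)^(ordOf B x - 1) * r^k)) * locRad B y ^ k := by
            rw [hρxk]; ring
          rw [h5]
          have h6 : (1:ℝ) ≤ (k:ℝ)^(ordOf B y - 1) := one_le_pow₀ (by exact_mod_cast hk1)
          have h7 := hK4 k (le_trans (le_max_left _ _) hk)
          have h8 : (0:ℝ) < locRad B y ^ k := pow_pos hρypos k
          calc (Cx * ((k:ℝ)^(ordOf B x - 1) * r^k)) * locRad B y ^ k
              ≤ 1 * locRad B y ^ k := by gcongr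
            _ ≤ (Cx + 1) * (k:ℝ)^(ordOf B y - 1) * locRad B y ^ k := by
                rw [one_mul]
                have h10 : (1:ℝ) ≤ (Cx + 1) * (k:ℝ)^(ordOf B y - 1) := by nlinarith
                nlinarith
        · refine ⟨1, fun k hk => ?_⟩
          rw [h1]
          have h4 : (k:ℝ)^(ordOf B x - 1) ≤ (k:ℝ)^(ordOf B y - 1) :=
            pow_le_pow_right₀ (by exact_mod_cast hk) (by omega)
          have h8 : (0:ℝ) ≤ locRad B y ^ k := by positivity
          have h9 : (0:ℝ) ≤ (k:ℝ)^(ordOf B y - 1) := by positivity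
          have h9x : (0:ℝ) ≤ (k:ℝ)^(ordOf B x - 1) := by positivity
          have h10 : Cx * (k:ℝ)^(ordOf B x - 1) ≤ (Cx+1) * (k:ℝ)^(ordOf B y - 1) := by nlinarith
          nlinarith [mul_le_mul_of_nonneg_right h10 h8]
      obtain ⟨K4, hx4⟩ := hxterm
      have hab : locRad B y < locRad B (x+y) ∨
          (locRad B y = locRad B (x+y) ∧ ordOf B y - 1 < ordOf B (x+y) - 1) := by
        rcases hkey with h | ⟨h1, h2⟩
        · exact Or.inl h
        · exact Or.inr ⟨h1, by omega⟩
      refine no_dom hρzpos (le_of_lt hρypos) hcl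
        (by positivity : (0:ℝ) < Cx + 1 + Cy) hab (max (max K1 K4) (max K2 K3))
        (fun k hk => ?_)
      have hk1 : K1 ≤ k := by omega
      have hk2 : K2 ≤ k := by omega
      have hk3 : K3 ≤ k := by omega
      have hk4 : K4 ≤ k := by omega
      calc cl * (k:ℝ)^(ordOf B (x+y) - 1) * locRad B (x+y) ^ k
          ≤ ‖(toEnd B ^ k) (x + y)‖ := hlow k hk1
        _ ≤ ‖(toEnd B ^ k) x‖ + ‖(toEnd B ^ k) y‖ := by
            rw [hadd]; exact norm_add_le _ _
        _ ≤ Cx * (k:ℝ)^(ordOf B x - 1) * locRad B x ^ k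
            + Cy * (k:ℝ)^(ordOf B y - 1) * locRad B y ^ k := by
            have := hupx k hk2
            have := hupy k hk3
            linarith
        _ ≤ (Cx + 1) * (k:ℝ)^(ordOf B y - 1) * locRad B y ^ k
            + Cy * (k:ℝ)^(ordOf B y - 1) * locRad B y ^ k := by
            have := hx4 k hk4
            linarith
        _ = (Cx + 1 + Cy) * (k:ℝ)^(ordOf B y - 1) * locRad B y ^ k := by ring

end SPAux
namespace SPAux

open Filter Topology

variable {n : ℕ}

lemma cplx_add (u v : Fin n → ℝ) : cplx (u + v) = cplx u + cplx v := by
  funext i; simp [cplx]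

lemma norm_cplx (v : Fin n → ℝ) : ‖cplx v‖ = ‖v‖ := by
  rw [Pi.norm_def, Pi.norm_def]
  congr 1
  refine Finset.sup_congr rfl fun i _ => ?_
  simp [cplx]

lemma mulVec_cplx (A : Matrix (Fin n) (Fin n) ℝ) (v : Fin n → ℝ) :
    (cplxM A).mulVec (cplx v) = cplx (A.mulVec v) := by
  funext i
  simp only [cplxM, cplx, Matrix.mulVec, dotProduct, Matrix.map_apply,
    Complex.coe_algebraMap]
  push_cast
  rfl

lemma toEnd_pow_cplx (A : Matrix (Fin n) (Fin n) ℝ) (k : ℕ) (v : Fin n → ℝ) :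
    (toEnd (cplxM A) ^ k) (cplx v) = cplx ((A ^ k).mulVec v) := by
  induction k with
  | zero => simp [Matrix.one_mulVec]
  | succ k ih =>
    rw [pow_succ', Module.End.mul_apply, ih]
    rw [toEnd, Matrix.toLin'_apply, mulVec_cplx, Matrix.mulVec_mulVec, ← pow_succ']

lemma pow_mulVec_mem {K : Set (Fin n → ℝ)} {A : Matrix (Fin n) (Fin n) ℝ}
    (hA : Set.MapsTo A.mulVec K K) (k : ℕ) {v : Fin n → ℝ} (hv : v ∈ K) :
    (A ^ k).mulVec v ∈ K := by
  induction k with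
  | zero => simpa [Matrix.one_mulVec] using hv
  | succ k ih =>
    have h : (A ^ (k+1)).mulVec v = A.mulVec ((A ^ k).mulVec v) := by
      rw [Matrix.mulVec_mulVec, ← pow_succ']
    rw [h]
    exact hA ih

lemma cone_normal {K : Set (Fin n → ℝ)} (hcl : IsClosed K)
    (hsmul : ∀ c : ℝ, 0 ≤ c → ∀ x ∈ K, c • x ∈ K)
    (hpt : ∀ x ∈ K, -x ∈ K → x = 0) :
    ∃ c : ℝ, 0 < c ∧ ∀ u ∈ K, ∀ v ∈ K, ‖u‖ ≤ c * ‖u + v‖ := by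
  by_contra hc
  push_neg at hc
  have hseq : ∀ j : ℕ, ∃ u ∈ K, ∃ v ∈ K, ((j:ℝ) + 1) * ‖u + v‖ < ‖u‖ := by
    intro j
    obtain ⟨u, hu, v, hv, h⟩ := hc ((j:ℝ)+1) (by positivity)
    exact ⟨u, hu, v, hv, h⟩
  choose u hu v hv hlt using hseq
  have hune : ∀ j, ‖u j‖ ≠ 0 := by
    intro j h
    have := hlt j
    rw [h] at this
    have h2 : (0:ℝ) ≤ ((j:ℝ)+1) * ‖u j + v j‖ := by positivity
    linarith
  set p : ℕ → (Fin n → ℝ) × (Fin n → ℝ) :=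
    fun j => ((1/‖u j‖) • u j, (1/‖u j‖) • v j) with hp
  have hunorm : ∀ j, ‖(p j).1‖ = 1 := by
    intro j
    rw [hp]
    simp only [norm_smul, norm_div, norm_one, Real.norm_eq_abs]
    rw [abs_of_nonneg (by positivity)]
    field_simp
    exact div_self (hune j)
  have hsumnorm : ∀ j, ‖(p j).1 + (p j).2‖ < 1/((j:ℝ)+1) := by
    intro j
    rw [hp]
    simp only
    rw [← smul_add, norm_smul, Real.norm_eq_abs, abs_of_nonneg (by positivity)]
    rw [div_mul_eq_mul_div, one_mul, div_lt_div_iff₀ (lt_of_le_of_ne (norm_nonneg _)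
      (Ne.symm (hune j))) (by positivity : (0:ℝ) < (j:ℝ)+1)]
    rw [one_mul]
    linarith [hlt j]
  have hmem : ∀ j, p j ∈ Metric.closedBall (0 : (Fin n → ℝ) × (Fin n → ℝ)) 2 := by
    intro j
    rw [Metric.mem_closedBall, dist_zero_right, Prod.norm_def]
    have h1 : ‖(p j).1‖ = 1 := hunorm j
    have h2 : ‖(p j).2‖ ≤ 2 := by
      have h3 := hsumnorm j
      have h4 : ‖(p j).2‖ ≤ ‖(p j).1 + (p j).2‖ + ‖(p j).1‖ := by
        have h5 := norm_sub_le ((p j).1 + (p j).2) ((p j).1)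
        simp only [add_sub_cancel_left] at h5
        linarith
      have h6 : 1/((j:ℝ)+1) ≤ 1 := by
        rw [div_le_one (by positivity)]
        simp
      linarith
    simp only [h1]
    exact max_le (by linarith) h2
  obtain ⟨a, _, φ, hφ, hconv⟩ :=
    tendsto_subseq_of_bounded Metric.isBounded_closedBall hmem
  have htend1 : Tendsto (fun j => (p (φ j)).1) atTop (nhds a.1) :=
    (continuous_fst.tendsto a).comp hconv
  have htend2 : Tendsto (fun j => (p (φ j)).2) atTop (nhds a.2) :=
    (continuous_snd.tendsto a).comp hconv
  have hmem1 : ∀ j, (p j).1 ∈ K := fun j => hsmul _ (by positivity) _ (hu j)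
  have hmem2 : ∀ j, (p j).2 ∈ K := fun j => hsmul _ (by positivity) _ (hv j)
  have haK : a.1 ∈ K := hcl.mem_of_tendsto htend1 (Eventually.of_forall fun j => hmem1 (φ j))
  have hbK : a.2 ∈ K := hcl.mem_of_tendsto htend2 (Eventually.of_forall fun j => hmem2 (φ j))
  have hanorm : ‖a.1‖ = 1 := by
    have h1 : Tendsto (fun j => ‖(p (φ j)).1‖) atTop (nhds ‖a.1‖) :=
      (continuous_norm.tendsto _).comp htend1
    have h2 : (fun j => ‖(p (φ j)).1‖) = fun _ => (1:ℝ) := funext fun j => hunorm (φ j)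
    rw [h2] at h1
    exact tendsto_nhds_unique h1 tendsto_const_nhds
  have hsum0 : a.1 + a.2 = 0 := by
    have h1 : Tendsto (fun j => (p (φ j)).1 + (p (φ j)).2) atTop (nhds (a.1 + a.2)) :=
      htend1.add htend2
    have h2 : Tendsto (fun j => (p (φ j)).1 + (p (φ j)).2) atTop (nhds 0) := by
      refine squeeze_zero_norm (a := fun j : ℕ => 1/((j:ℝ)+1)) (fun j => ?_) ?_
      · exact le_of_lt (lt_of_lt_of_le (hsumnorm (φ j)) (by
          have h3 : (j:ℝ) + 1 ≤ (φ j : ℝ) + 1 := by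
            have h4 : (j:ℝ) ≤ (φ j : ℝ) := by exact_mod_cast hφ.le_apply
            linarith
          exact div_le_div_of_nonneg_left one_pos.le (by positivity) h3))
      · exact tendsto_one_div_add_atTop_nhds_zero_nat
    exact tendsto_nhds_unique h1 h2
  have hneg : -a.1 ∈ K := by
    have : a.2 = -a.1 := by
      rw [eq_neg_iff_add_eq_zero, add_comm]
      exact hsum0
    rw [← this]
    exact hbK
  have := hpt a.1 haK hneg
  rw [this, norm_zero] at hanorm
  exact one_ne_zero hanorm.symm

end SPAux

theorem specPair_add_eq_max {n : ℕ} (K : Set (Fin n → ℝ)) (hK : IsProperCone K)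
    (A : Matrix (Fin n) (Fin n) ℝ) (hA : Set.MapsTo A.mulVec K K)
    (x : Fin n → ℝ) (hx : x ∈ K) (y : Fin n → ℝ) (hy : y ∈ K) :
    specPairR A (x + y) = lexMax (specPairR A x) (specPairR A y) := by
  obtain ⟨hcl, _, hsmul, hpt, _⟩ := hK
  obtain ⟨c, hcpos, hnorm⟩ := SPAux.cone_normal hcl hsmul hpt
  set B := cplxM A with hB
  have hdom : ∀ (u v : Fin n → ℝ), u ∈ K → v ∈ K →
      ∀ k : ℕ, ‖(toEnd B ^ k) (cplx u)‖ ≤ c * ‖(toEnd B ^ k) (cplx (u + v))‖ := by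
    intro u v hu hv k
    rw [hB, SPAux.toEnd_pow_cplx, SPAux.toEnd_pow_cplx, SPAux.norm_cplx, SPAux.norm_cplx]
    have h1 : (A^k).mulVec (u + v) = (A^k).mulVec u + (A^k).mulVec v :=
      Matrix.mulVec_add _ _ _
    rw [h1]
    exact hnorm _ (SPAux.pow_mulVec_mem hA k hu) _ (SPAux.pow_mulVec_mem hA k hv)
  have h1 : lexLe (specPair B (cplx x)) (specPair B (cplx (x+y))) :=
    SPAux.lexLe_of_dominated B (le_of_lt hcpos) (fun k => hdom x y hx hy k)
  have h2 : lexLe (specPair B (cplx y)) (specPair B (cplx (x+y))) := by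
    refine SPAux.lexLe_of_dominated B (le_of_lt hcpos) (fun k => ?_)
    have h := hdom y x hy hx k
    rwa [add_comm y x] at h
  have hsum1 : lexLe (specPair B (cplx (x+y)))
      (lexMax (specPair B (cplx x)) (specPair B (cplx y))) := by
    rcases em (lexLe (specPair B (cplx x)) (specPair B (cplx y))) with h | h
    · rw [lexMax, if_pos h]
      have h3 := SPAux.lexLe_sum B h
      rwa [← SPAux.cplx_add] at h3
    · rw [lexMax, if_neg h]
      have h' : lexLe (specPair B (cplx y)) (specPair B (cplx x)) :=
        (SPAux.lexLe_total _ _).resolve_left h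
      have h3 := SPAux.lexLe_sum B h'
      rw [← SPAux.cplx_add, add_comm y x] at h3
      exact h3
  have hsum2 : lexLe (lexMax (specPair B (cplx x)) (specPair B (cplx y)))
      (specPair B (cplx (x+y))) := by
    rw [lexMax]
    split_ifs with h
    · exact h2
    · exact h1
  exact SPAux.lexLe_antisymm hsum1 hsum2
end

section
/- Let K be a proper cone in ℝ^n and A a real matrix with AK ⊆ K. For any λ > 0, the set F_λ = {x ∈ K : ρ_x(A) < λ} is an A-invariant face of K, and F_λ coincides with {x ∈ K : the series Σ_{j≥0} A^j x / λ^{j+1} converges}. -/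
open Matrix Module

section Aux

open Filter Topology

variable {n : ℕ}

/-- Bridge: powers of `toEnd` are matrix powers acting by `mulVec`. -/
lemma toEnd_pow_apply (B : Matrix (Fin n) (Fin n) ℂ) (j : ℕ) (v : Fin n → ℂ) :
    ((toEnd B) ^ j) v = (B ^ j).mulVec v := by
  induction j with
  | zero => simp [Matrix.one_mulVec]
  | succ j ih =>
      rw [pow_succ', pow_succ']
      show toEnd B ((toEnd B ^ j) v) = _
      rw [ih, toEnd, Matrix.toLin'_apply, Matrix.mulVec_mulVec]

lemma cplx_add (x y : Fin n → ℝ) : cplx (x + y) = cplx x + cplx y := by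
  funext i; simp [cplx]

lemma cplx_smul (c : ℝ) (x : Fin n → ℝ) : cplx (c • x) = (c : ℂ) • cplx x := by
  funext i; simp [cplx]

lemma cplx_zero : cplx (0 : Fin n → ℝ) = 0 := by funext i; simp [cplx]

lemma continuous_cplx : Continuous (cplx : (Fin n → ℝ) → (Fin n → ℂ)) :=
  continuous_pi fun i => Complex.continuous_ofReal.comp (continuous_apply i)

lemma norm_cplx (x : Fin n → ℝ) : ‖cplx x‖ = ‖x‖ := by
  rw [Pi.norm_def, Pi.norm_def]
  congr 1
  exact Finset.sup_congr rfl fun i _ => Complex.nnnorm_real (x i)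

lemma cplxM_mulVec (A : Matrix (Fin n) (Fin n) ℝ) (x : Fin n → ℝ) :
    cplx (A.mulVec x) = (cplxM A).mulVec (cplx x) := by
  funext i
  simp only [cplx, cplxM, Matrix.mulVec, dotProduct, Matrix.map_apply]
  push_cast
  rfl

lemma cplxM_pow (A : Matrix (Fin n) (Fin n) ℝ) (j : ℕ) :
    cplxM (A ^ j) = (cplxM A) ^ j := by
  have : cplxM (A ^ j) = (RingHom.mapMatrix (algebraMap ℝ ℂ) : Matrix (Fin n) (Fin n) ℝ →+* _) (A ^ j) := rfl
  rw [this, map_pow]; rfl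

end Aux
section Aux2

open Filter Topology

/-- Geometric domination of binomial-polynomial terms. -/
lemma geo_bound (i : ℕ) {a r : ℝ} (ha : 0 ≤ a) (har : a < r) :
    ∃ C : ℝ, 0 ≤ C ∧ ∀ j : ℕ, (j.choose i : ℝ) * a ^ (j - i) ≤ C * r ^ j := by
  have hr : 0 < r := lt_of_le_of_lt ha har
  rcases eq_or_lt_of_le ha with h0 | ha0
  · -- a = 0
    refine ⟨(r ^ i)⁻¹, by positivity, fun j => ?_⟩
    rcases lt_trichotomy j i with h | h | h
    · rw [Nat.choose_eq_zero_of_lt h]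
      simp only [Nat.cast_zero, zero_mul]
      positivity
    · subst h
      simp only [Nat.choose_self, Nat.cast_one, Nat.sub_self, pow_zero, mul_one]
      rw [inv_mul_cancel₀ (by positivity)]
    · rw [← h0, zero_pow (by omega)]
      simp only [mul_zero]
      positivity
  · -- a > 0
    have hq : a / r < 1 := (div_lt_one hr).2 har
    have hq0 : 0 ≤ a / r := by positivity
    have htend : Tendsto (fun j : ℕ => ((j : ℝ) + 1) ^ i * (a / r) ^ j) atTop (𝓝 0) := by
      have h1 : Tendsto (fun m : ℕ => (m : ℝ) ^ i * (a / r) ^ m) atTop (𝓝 0) := by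
        have := (summable_pow_mul_geometric_of_norm_lt_one (R := ℝ) i
          (by rwa [Real.norm_eq_abs, abs_of_nonneg hq0])).tendsto_atTop_zero
        exact this
      have h2 := h1.comp (tendsto_add_atTop_nat 1)
      refine Tendsto.congr (f₁ := fun j : ℕ =>
          (r / a) * (((j : ℝ) + 1) ^ i * (a / r) ^ (j + 1))) ?_ ?_
      · intro j
        show r / a * (((j : ℝ) + 1) ^ i * (a / r) ^ (j + 1)) = ((j : ℝ) + 1) ^ i * (a / r) ^ j
        rw [pow_succ]
        field_simp
      · have := h2.const_mul (r / a)
        simpa [Function.comp, mul_zero] using this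
    obtain ⟨C, hC⟩ := htend.bddAbove_range
    have hC0 : 0 ≤ C := le_trans (by positivity) (hC (Set.mem_range_self 0))
    refine ⟨C * (a ^ i)⁻¹, by positivity, fun j => ?_⟩
    rcases lt_or_ge j i with h | h
    · rw [Nat.choose_eq_zero_of_lt h]
      simp only [Nat.cast_zero, zero_mul]
      positivity
    · have h1 : (j.choose i : ℝ) ≤ ((j : ℝ) + 1) ^ i := by
        calc (j.choose i : ℝ) ≤ (j : ℝ) ^ i := by exact_mod_cast Nat.choose_le_pow j i
        _ ≤ ((j : ℝ) + 1) ^ i := by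
          apply pow_le_pow_left₀ (by positivity)
          linarith
      calc (j.choose i : ℝ) * a ^ (j - i)
          ≤ ((j : ℝ) + 1) ^ i * a ^ (j - i) := by
            apply mul_le_mul_of_nonneg_right h1 (by positivity)
        _ = (((j : ℝ) + 1) ^ i * (a / r) ^ j) * (a ^ i)⁻¹ * r ^ j := by
            rw [pow_sub₀ a (ne_of_gt ha0) h, div_pow]
            field_simp
        _ ≤ C * (a ^ i)⁻¹ * r ^ j := by
            apply mul_le_mul_of_nonneg_right _ (by positivity)
            apply mul_le_mul_of_nonneg_right (hC (Set.mem_range_self j)) (by positivity)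

end Aux2
section Spec

open Filter Topology Module

variable {n : ℕ} (B : Matrix (Fin n) (Fin n) ℂ)

lemma codisjoint_max_others (μ : ℂ) :
    (toEnd B).maxGenEigenspace μ ⊔ othersSup B μ = ⊤ := by
  rw [eq_top_iff, ← Module.End.iSup_maxGenEigenspace_eq_top (toEnd B)]
  apply iSup_le
  intro ν
  rcases eq_or_ne ν μ with rfl | h
  · exact le_sup_left
  · exact le_sup_of_le_right
      (le_iSup₂ (f := fun ν (_ : ν ≠ μ) => (toEnd B).maxGenEigenspace ν) ν h)

lemma disjoint_max_others (μ : ℂ) :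
    Disjoint ((toEnd B).maxGenEigenspace μ) (othersSup B μ) :=
  (Module.End.independent_maxGenEigenspace (toEnd B)) μ

lemma hasComp_max_ne_bot {μ : ℂ} {x : Fin n → ℂ} (h : HasComp B μ x) :
    (toEnd B).maxGenEigenspace μ ≠ ⊥ := by
  intro hbot
  apply h
  have htop : othersSup B μ = ⊤ := by
    rw [eq_top_iff, ← Module.End.iSup_maxGenEigenspace_eq_top (toEnd B)]
    apply iSup_le
    intro ν
    rcases eq_or_ne ν μ with rfl | hne
    · rw [hbot]; exact bot_le
    · exact le_iSup₂ (f := fun ν (_ : ν ≠ μ) => (toEnd B).maxGenEigenspace ν) ν hne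
  rw [htop]
  trivial

lemma finite_locRad_set (x : Fin n → ℂ) :
    {r : ℝ | ∃ μ : ℂ, HasComp B μ x ∧ r = ‖μ‖}.Finite := by
  have hfin : {μ : ℂ | (toEnd B).maxGenEigenspace μ ≠ ⊥}.Finite :=
    Submodule.finite_ne_bot_of_iSupIndep (Module.End.independent_maxGenEigenspace (toEnd B))
  apply Set.Finite.subset (hfin.image (fun μ => ‖μ‖))
  rintro r ⟨μ, hμ, rfl⟩
  exact ⟨μ, hasComp_max_ne_bot B hμ, rfl⟩

/-- Growth bound on a generalized eigenspace. -/
lemma gen_eig_growth {μ : ℂ} {w : Fin n → ℂ} (hw : w ∈ (toEnd B).maxGenEigenspace μ)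
    {r : ℝ} (hr : ‖μ‖ < r) :
    ∃ C : ℝ, 0 ≤ C ∧ ∀ j : ℕ, ‖((toEnd B) ^ j) w‖ ≤ C * r ^ j := by
  classical
  set f := toEnd B with hf
  set N := f - μ • 1 with hNdef
  obtain ⟨k, hk⟩ := (Module.End.mem_maxGenEigenspace f μ w).1 hw
  have hper : ∀ i : ℕ, ∃ C : ℝ, 0 ≤ C ∧ ∀ j : ℕ,
      (j.choose i : ℝ) * ‖μ‖ ^ (j - i) * ‖(N ^ i) w‖ ≤ C * r ^ j := by
    intro i
    obtain ⟨C, hC0, hC⟩ := geo_bound i (norm_nonneg μ) hr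
    refine ⟨C * ‖(N ^ i) w‖, by positivity, fun j => ?_⟩
    calc (j.choose i : ℝ) * ‖μ‖ ^ (j - i) * ‖(N ^ i) w‖
        ≤ (C * r ^ j) * ‖(N ^ i) w‖ := mul_le_mul_of_nonneg_right (hC j) (norm_nonneg _)
      _ = C * ‖(N ^ i) w‖ * r ^ j := by ring
  choose Cs hCs0 hCs using hper
  refine ⟨∑ i ∈ Finset.range k, Cs i, Finset.sum_nonneg (fun i _ => hCs0 i), fun j => ?_⟩
  -- binomial expansion
  have hcomm : Commute N (μ • (1 : Module.End ℂ (Fin n → ℂ))) :=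
    (Commute.one_right N).smul_right μ
  have hfeq : f = N + μ • 1 := by rw [hNdef]; abel
  have happ : (f ^ j) w =
      ∑ i ∈ Finset.range (j + 1), (j.choose i : ℂ) • μ ^ (j - i) • ((N ^ i) w) := by
    rw [hfeq, hcomm.add_pow, LinearMap.sum_apply]
    refine Finset.sum_congr rfl fun i _ => ?_
    rw [Module.End.mul_apply, Module.End.mul_apply, Module.End.natCast_apply, smul_pow, one_pow,
      LinearMap.smul_apply, Module.End.one_apply, LinearMap.map_smul_of_tower,
      LinearMap.map_smul_of_tower, ← Nat.cast_smul_eq_nsmul ℂ, smul_comm]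
  set t : ℕ → ℝ := fun i => (j.choose i : ℝ) * ‖μ‖ ^ (j - i) * ‖(N ^ i) w‖ with ht
  have hnorm : ‖(f ^ j) w‖ ≤ ∑ i ∈ Finset.range (j + 1), t i := by
    rw [happ]
    refine (norm_sum_le _ _).trans (le_of_eq (Finset.sum_congr rfl fun i _ => ?_))
    rw [norm_smul, norm_smul, norm_pow]
    simp only [Complex.norm_natCast, ht]
    ring
  have hNzero : ∀ i, k ≤ i → (N ^ i) w = 0 := by
    intro i hi
    rw [← Nat.sub_add_cancel hi, pow_add, Module.End.mul_apply, hk, map_zero]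
  have hsum_eq : ∑ i ∈ Finset.range (j + 1), t i = ∑ i ∈ Finset.range k, t i := by
    have e1 : ∑ i ∈ Finset.range (j + 1), t i = ∑ i ∈ Finset.range (max (j + 1) k), t i := by
      apply Finset.sum_subset (Finset.range_subset_range.2 (le_max_left _ _))
      intro i _ hi
      rw [Finset.mem_range, not_lt] at hi
      have : j.choose i = 0 := Nat.choose_eq_zero_of_lt (by omega)
      simp [ht, this]
    have e2 : ∑ i ∈ Finset.range k, t i = ∑ i ∈ Finset.range (max (j + 1) k), t i := by
      apply Finset.sum_subset (Finset.range_subset_range.2 (le_max_right _ _))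
      intro i _ hi
      rw [Finset.mem_range, not_lt] at hi
      simp [ht, hNzero i hi]
    rw [e1, e2]
  calc ‖(f ^ j) w‖ ≤ ∑ i ∈ Finset.range k, t i := by rw [← hsum_eq]; exact hnorm
    _ ≤ ∑ i ∈ Finset.range k, Cs i * r ^ j :=
        Finset.sum_le_sum fun i _ => hCs i j
    _ = (∑ i ∈ Finset.range k, Cs i) * r ^ j := by rw [Finset.sum_mul]

end Spec
section Main

open Filter Topology Module

variable {n : ℕ}

lemma decay_of_locRad_lt (A : Matrix (Fin n) (Fin n) ℝ) (x : Fin n → ℝ) {lam : ℝ}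
    (hlam : 0 < lam) (h : locRadR A x < lam) :
    ∃ C r : ℝ, 0 ≤ C ∧ 0 ≤ r ∧ r < lam ∧
      ∀ j : ℕ, ‖(A ^ j).mulVec x‖ ≤ C * r ^ j := by
  classical
  set B := cplxM A with hB
  set f := toEnd B with hf
  set y := cplx x with hy
  have hmem : y ∈ ⨆ ν : ℂ, f.maxGenEigenspace ν := by
    rw [Module.End.iSup_maxGenEigenspace_eq_top]; trivial
  obtain ⟨c, hc, hsum⟩ := (Submodule.mem_iSup_iff_exists_finsupp _ _).1 hmem
  have hnorm_eq : ∀ j : ℕ, ‖(A ^ j).mulVec x‖ = ‖(f ^ j) y‖ := by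
    intro j
    rw [toEnd_pow_apply, ← norm_cplx ((A ^ j).mulVec x), cplxM_mulVec, cplxM_pow]
  have hlt : ∀ ν ∈ c.support, ‖ν‖ < lam := by
    intro ν hν
    by_cases hcomp : HasComp B ν y
    · have hb : BddAbove {r : ℝ | ∃ μ : ℂ, HasComp B μ y ∧ r = ‖μ‖} :=
        (finite_locRad_set B y).bddAbove
      exact lt_of_le_of_lt (le_csSup hb ⟨ν, hcomp, rfl⟩) h
    · exfalso
      have hyo : y ∈ othersSup B ν := not_not.1 hcomp
      have hrest : ∑ a ∈ c.support.erase ν, c a ∈ othersSup B ν := by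
        apply Submodule.sum_mem
        intro a ha
        have hane : a ≠ ν := Finset.ne_of_mem_erase ha
        exact (le_iSup₂ (f := fun ν' (_ : ν' ≠ ν) => f.maxGenEigenspace ν') a hane) (hc a)
      have hcν : c ν ∈ othersSup B ν := by
        have hysum : y = c ν + ∑ a ∈ c.support.erase ν, c a := by
          rw [← hsum, Finsupp.sum, Finset.add_sum_erase _ _ hν]
        have : c ν = y - ∑ a ∈ c.support.erase ν, c a := by rw [hysum]; abel
        rw [this]
        exact Submodule.sub_mem _ hyo hrest
      have : c ν = 0 :=
        (Submodule.disjoint_def.1 (disjoint_max_others B ν)) _ (hc ν) hcν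
      exact (Finsupp.mem_support_iff.1 hν) this
  rcases c.support.eq_empty_or_nonempty with hemp | hne
  · -- y = 0
    have hy0 : y = 0 := by rw [← hsum, Finsupp.sum, hemp, Finset.sum_empty]
    refine ⟨0, lam / 2, le_refl 0, by positivity, by linarith, fun j => ?_⟩
    rw [hnorm_eq j, hy0, map_zero, norm_zero, zero_mul]
  · set r₀ : ℝ := c.support.sup' hne (fun ν => ‖ν‖) with hr₀
    obtain ⟨ν₀, hν₀, hν₀eq⟩ := c.support.exists_mem_eq_sup' hne (fun ν => ‖ν‖)
    have hr₀0 : 0 ≤ r₀ := by rw [hr₀, hν₀eq]; exact norm_nonneg _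
    have hr₀lt : r₀ < lam := by rw [hr₀, hν₀eq]; exact hlt ν₀ hν₀
    set r : ℝ := (r₀ + lam) / 2 with hr
    have hrlt : r < lam := by rw [hr]; linarith
    have hr0 : 0 ≤ r := by rw [hr]; linarith
    have hbig : ∀ ν ∈ c.support, ‖ν‖ < r := by
      intro ν hν
      have : ‖ν‖ ≤ r₀ := Finset.le_sup' (fun ν => ‖ν‖) hν
      rw [hr]; linarith
    have key : ∀ ν ∈ c.support, ∃ C : ℝ, 0 ≤ C ∧ ∀ j : ℕ, ‖(f ^ j) (c ν)‖ ≤ C * r ^ j :=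
      fun ν hν => gen_eig_growth B (hc ν) (hbig ν hν)
    choose! Cf hCf0 hCf using key
    refine ⟨∑ ν ∈ c.support, Cf ν, r, Finset.sum_nonneg fun ν hν => hCf0 ν hν, hr0, hrlt,
      fun j => ?_⟩
    rw [hnorm_eq j]
    have hydecomp : y = ∑ ν ∈ c.support, c ν := by rw [← hsum]; rfl
    calc ‖(f ^ j) y‖ = ‖∑ ν ∈ c.support, (f ^ j) (c ν)‖ := by rw [hydecomp, map_sum]
      _ ≤ ∑ ν ∈ c.support, ‖(f ^ j) (c ν)‖ := norm_sum_le _ _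
      _ ≤ ∑ ν ∈ c.support, Cf ν * r ^ j := Finset.sum_le_sum fun ν hν => hCf ν hν j
      _ = (∑ ν ∈ c.support, Cf ν) * r ^ j := by rw [Finset.sum_mul]

lemma locRad_lt_of_tendsto (A : Matrix (Fin n) (Fin n) ℝ) (x : Fin n → ℝ) {lam : ℝ}
    (hlam : 0 < lam)
    (h : Filter.Tendsto (fun j : ℕ => ((lam : ℂ) ^ j)⁻¹ • (cplxM A ^ j).mulVec (cplx x))
      atTop (𝓝 0)) :
    locRadR A x < lam := by
  classical
  set B := cplxM A with hB
  set f := toEnd B with hf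
  set y := cplx x with hy
  have h' : Filter.Tendsto (fun j : ℕ => ((lam : ℂ) ^ j)⁻¹ • (f ^ j) y) atTop (𝓝 0) := by
    apply h.congr
    intro j
    rw [toEnd_pow_apply]
  have key : ∀ μ : ℂ, HasComp B μ y → ‖μ‖ < lam := by
    intro μ hcomp
    by_contra hge
    push_neg at hge
    have hmem : y ∈ (f.maxGenEigenspace μ) ⊔ othersSup B μ := by
      rw [codisjoint_max_others]; trivial
    obtain ⟨w, hw, z, hz, hwz⟩ := Submodule.mem_sup.1 hmem
    have hwne : w ≠ 0 := by
      rintro rfl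
      exact hcomp (by rw [← hwz, zero_add]; exact hz)
    have hcompl : IsCompl (f.maxGenEigenspace μ) (othersSup B μ) :=
      ⟨disjoint_max_others B μ, codisjoint_iff.2 (codisjoint_max_others B μ)⟩
    set P := Submodule.linearProjOfIsCompl _ _ hcompl with hP
    have hinv1 : ∀ j : ℕ, (f ^ j) w ∈ f.maxGenEigenspace μ := fun j =>
      Module.End.mapsTo_maxGenEigenspace_of_comm ((Commute.refl f).pow_right j) μ hw
    have hinv2 : ∀ j : ℕ, (f ^ j) z ∈ othersSup B μ := by
      intro j
      have hmap : Submodule.map (f ^ j) (othersSup B μ) ≤ othersSup B μ := by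
        rw [othersSup, Submodule.map_iSup]
        apply iSup_le; intro ν
        rw [Submodule.map_iSup]
        apply iSup_le; intro hν
        refine le_trans ?_ (le_iSup₂ (f := fun ν (_ : ν ≠ μ) => (toEnd B).maxGenEigenspace ν) ν hν)
        rintro - ⟨u, hu, rfl⟩
        exact Module.End.mapsTo_maxGenEigenspace_of_comm ((Commute.refl f).pow_right j) ν hu
      exact hmap (Submodule.mem_map_of_mem (hz))
    have hproj : ∀ j : ℕ, (Submodule.subtype _).comp P (((lam : ℂ) ^ j)⁻¹ • (f ^ j) y) =
        ((lam : ℂ) ^ j)⁻¹ • (f ^ j) w := by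
      intro j
      rw [LinearMap.map_smul]
      congr 1
      have : (f ^ j) y = (f ^ j) w + (f ^ j) z := by rw [← hwz, map_add]
      rw [LinearMap.comp_apply, this, map_add,
        (by exact Submodule.projectionOnto_apply_of_mem_right hcompl (hinv2 j) : P ((f ^ j) z) = 0), add_zero]
      have h2 : P ((f ^ j) w) = ⟨(f ^ j) w, hinv1 j⟩ := by
        exact Submodule.linearProjOfIsCompl_apply_left hcompl ⟨(f ^ j) w, hinv1 j⟩
      rw [h2, Submodule.coe_subtype]
    have hQcont : Continuous ((Submodule.subtype _).comp P) :=
      LinearMap.continuous_of_finiteDimensional _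
    have T1 : Filter.Tendsto (fun j : ℕ => ((lam : ℂ) ^ j)⁻¹ • (f ^ j) w) atTop (𝓝 0) := by
      have := (hQcont.tendsto 0).comp h'
      simp only [Function.comp, map_zero] at this
      exact this.congr hproj
    -- nilpotency ladder
    set N := f - μ • 1 with hN
    have hex : ∃ k : ℕ, (N ^ k) w = 0 := (Module.End.mem_maxGenEigenspace f μ w).1 hw
    set k := Nat.find hex with hk
    have hk0 : k ≠ 0 := by
      intro h0
      have := Nat.find_spec hex
      rw [← hk, h0, pow_zero, Module.End.one_apply] at this
      exact hwne this
    set u := (N ^ (k - 1)) w with hu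
    have hune : u ≠ 0 := Nat.find_min hex (Nat.sub_lt (Nat.pos_of_ne_zero hk0) one_pos)
    have hNu : N u = 0 := by
      have : (N ^ k) w = 0 := Nat.find_spec hex
      rw [hu, ← Module.End.mul_apply, ← pow_succ', Nat.sub_add_cancel (Nat.one_le_iff_ne_zero.2 hk0)]
      exact this
    have hfu : f u = μ • u := by
      have : f = N + μ • 1 := by rw [hN]; abel
      rw [this, LinearMap.add_apply, hNu, zero_add, LinearMap.smul_apply, Module.End.one_apply]
    have hfju : ∀ j : ℕ, (f ^ j) u = μ ^ j • u := by
      intro j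
      induction j with
      | zero => simp
      | succ j ih =>
          rw [pow_succ, Module.End.mul_apply, hfu, LinearMap.map_smul, ih, smul_smul, ← pow_succ']
    have hcomm : Commute f N := by
      rw [hN]
      exact (Commute.refl f).sub_right ((Commute.one_right f).smul_right μ)
    have hM : ∀ j : ℕ, (N ^ (k - 1)) ((f ^ j) w) = μ ^ j • u := by
      intro j
      rw [← Module.End.mul_apply, ← (hcomm.pow_pow j (k - 1)).eq, Module.End.mul_apply, ← hu,
        hfju j]
    have hMcont : Continuous (N ^ (k - 1) : Module.End ℂ (Fin n → ℂ)) :=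
      LinearMap.continuous_of_finiteDimensional _
    have T2 : Filter.Tendsto (fun j : ℕ => ((lam : ℂ) ^ j)⁻¹ • μ ^ j • u) atTop (𝓝 0) := by
      have := (hMcont.tendsto 0).comp T1
      simp only [Function.comp, map_zero] at this
      apply this.congr
      intro j
      rw [Function.comp_apply, LinearMap.map_smul, hM j]
    have T3 : Filter.Tendsto (fun j : ℕ => ‖((lam : ℂ) ^ j)⁻¹ • μ ^ j • u‖) atTop (𝓝 0) := by
      have := T2.norm
      rwa [norm_zero] at this
    have hlow : ∀ j : ℕ, ‖u‖ ≤ ‖((lam : ℂ) ^ j)⁻¹ • μ ^ j • u‖ := by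
      intro j
      rw [norm_smul, norm_smul, norm_inv, norm_pow, norm_pow, Complex.norm_real,
        Real.norm_eq_abs, abs_of_pos hlam]
      have h1 : lam ^ j ≤ ‖μ‖ ^ j := pow_le_pow_left₀ hlam.le hge j
      have h2 : (0:ℝ) < lam ^ j := by positivity
      calc ‖u‖ = (lam ^ j)⁻¹ * (lam ^ j * ‖u‖) := by field_simp
        _ ≤ (lam ^ j)⁻¹ * (‖μ‖ ^ j * ‖u‖) := by
            apply mul_le_mul_of_nonneg_left _ (by positivity)
            exact mul_le_mul_of_nonneg_right h1 (norm_nonneg u)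
    have : ‖u‖ ≤ 0 := ge_of_tendsto' T3 hlow
    have hupos : 0 < ‖u‖ := norm_pos_iff.2 hune
    linarith
  -- conclude
  have hS : locRadR A x = sSup {r : ℝ | ∃ μ : ℂ, HasComp B μ y ∧ r = ‖μ‖} := rfl
  rw [hS]
  rcases Set.eq_empty_or_nonempty {r : ℝ | ∃ μ : ℂ, HasComp B μ y ∧ r = ‖μ‖} with hemp | hne
  · rw [hemp, Real.sSup_empty]; exact hlam
  · obtain ⟨μ, hcomp, heq⟩ := hne.csSup_mem (finite_locRad_set B y)
    rw [heq]
    exact key μ hcomp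

end Main
section Normal

open Filter Topology

lemma cone_normal {n : ℕ} {K : Set (Fin n → ℝ)} (hK : IsProperCone K) :
    ∃ γ : ℝ, 0 ≤ γ ∧ ∀ a ∈ K, ∀ b ∈ K, ‖a‖ ≤ γ * ‖a + b‖ := by
  obtain ⟨hclosed, hadd, hsmul, hpointed, -⟩ := hK
  by_contra hcon
  push_neg at hcon
  have hm : ∀ m : ℕ, ∃ a ∈ K, ∃ b ∈ K, (m : ℝ) * ‖a + b‖ < ‖a‖ := by
    intro m
    obtain ⟨a, ha, b, hb, hab⟩ := hcon m (Nat.cast_nonneg m)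
    exact ⟨a, ha, b, hb, hab⟩
  choose a ha b hb hab using hm
  have hapos : ∀ m, 0 < ‖a m‖ := fun m => lt_of_le_of_lt (by positivity) (hab m)
  set α : ℕ → (Fin n → ℝ) := fun m => ‖a m‖⁻¹ • a m with hα
  set β : ℕ → (Fin n → ℝ) := fun m => ‖a m‖⁻¹ • b m with hβ
  have hαK : ∀ m, α m ∈ K := fun m => hsmul _ (by positivity) _ (ha m)
  have hβK : ∀ m, β m ∈ K := fun m => hsmul _ (by positivity) _ (hb m)
  have hαnorm : ∀ m, ‖α m‖ = 1 := by
    intro m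
    rw [hα]
    rw [norm_smul, norm_inv, norm_norm, inv_mul_cancel₀ (ne_of_gt (hapos m))]
  have hsmall : ∀ m : ℕ, (m : ℝ) * ‖α m + β m‖ < 1 := by
    intro m
    have : α m + β m = ‖a m‖⁻¹ • (a m + b m) := by rw [hα, hβ, smul_add]
    rw [this, norm_smul, norm_inv, norm_norm]
    have h1 := hab m
    have h2 : (0:ℝ) < ‖a m‖⁻¹ := inv_pos.2 (hapos m)
    calc (m : ℝ) * (‖a m‖⁻¹ * ‖a m + b m‖) = ‖a m‖⁻¹ * ((m : ℝ) * ‖a m + b m‖) := by ring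
      _ < ‖a m‖⁻¹ * ‖a m‖ := by exact mul_lt_mul_of_pos_left h1 h2
      _ = 1 := inv_mul_cancel₀ (ne_of_gt (hapos m))
  have htend : Tendsto (fun m => α m + β m) atTop (𝓝 0) := by
    apply squeeze_zero_norm' (a := fun m : ℕ => 1 / (m : ℝ))
    · filter_upwards [eventually_ge_atTop 1] with m hm1
      have hmpos : (0:ℝ) < (m : ℝ) := by exact_mod_cast hm1
      rw [le_div_iff₀ hmpos, mul_comm]
      exact (hsmall m).le
    · exact tendsto_one_div_atTop_nhds_zero_nat
  have hcpt : IsCompact (K ∩ Metric.sphere (0 : Fin n → ℝ) 1) :=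
    (isCompact_sphere (0 : Fin n → ℝ) 1).inter_left hclosed
  have hmem : ∀ m, α m ∈ K ∩ Metric.sphere (0 : Fin n → ℝ) 1 := by
    intro m
    refine ⟨hαK m, ?_⟩
    rw [Metric.mem_sphere, dist_zero_right]
    exact hαnorm m
  obtain ⟨p, hp, φ, hφ, hconv⟩ := hcpt.tendsto_subseq hmem
  have hβconv : Tendsto (fun i => β (φ i)) atTop (𝓝 (-p)) := by
    have h1 : Tendsto (fun i => α (φ i) + β (φ i)) atTop (𝓝 0) :=
      htend.comp hφ.tendsto_atTop
    have h2 := h1.sub hconv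
    rw [zero_sub] at h2
    apply h2.congr
    intro i
    simp
  have hnegp : -p ∈ K := hclosed.mem_of_tendsto hβconv
    (Filter.Eventually.of_forall fun i => hβK (φ i))
  have hp0 : p = 0 := hpointed p hp.1 hnegp
  have : ‖p‖ = 1 := by
    have := hp.2
    rwa [Metric.mem_sphere, dist_zero_right] at this
  rw [hp0, norm_zero] at this
  norm_num at this

end Normal
open Filter Topology

theorem locRad_sublevel_invariant_face {n : ℕ} (K : Set (Fin n → ℝ)) (hK : IsProperCone K)
    (A : Matrix (Fin n) (Fin n) ℝ) (hA : Set.MapsTo A.mulVec K K)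
    (lam : ℝ) (hlam : 0 < lam) :
    IsFace K {x | x ∈ K ∧ locRadR A x < lam} ∧
    Set.MapsTo A.mulVec {x | x ∈ K ∧ locRadR A x < lam} {x | x ∈ K ∧ locRadR A x < lam} ∧
    {x | x ∈ K ∧ locRadR A x < lam} =
      {x | x ∈ K ∧ ∃ l, Filter.Tendsto
        (fun N => ∑ j ∈ Finset.range N, (lam ^ (j + 1))⁻¹ • (A ^ j).mulVec x)
        Filter.atTop (nhds l)} := by
  classical
  -- the geometric-decay property
  set P : (Fin n → ℝ) → Prop := fun x => ∃ C r : ℝ, 0 ≤ C ∧ 0 ≤ r ∧ r < lam ∧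
    ∀ j : ℕ, ‖(A ^ j).mulVec x‖ ≤ C * r ^ j with hPdef
  have h1 : ∀ x, locRadR A x < lam → P x := fun x hx => decay_of_locRad_lt A x hlam hx
  have h2 : ∀ x, P x → Filter.Tendsto
      (fun j : ℕ => ((lam : ℂ) ^ j)⁻¹ • (cplxM A ^ j).mulVec (cplx x)) atTop (𝓝 0) := by
    rintro x ⟨C, r, hC, hr0, hrlt, hb⟩
    apply squeeze_zero_norm (a := fun j : ℕ => C * (r / lam) ^ j)
    · intro j
      have he : ‖((lam : ℂ) ^ j)⁻¹ • (cplxM A ^ j).mulVec (cplx x)‖ =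
          (lam ^ j)⁻¹ * ‖(A ^ j).mulVec x‖ := by
        rw [norm_smul, norm_inv, norm_pow, Complex.norm_real, Real.norm_eq_abs,
          abs_of_pos hlam, ← cplxM_pow, ← cplxM_mulVec, norm_cplx]
      rw [he]
      have h3 : (lam ^ j)⁻¹ * ‖(A ^ j).mulVec x‖ ≤ (lam ^ j)⁻¹ * (C * r ^ j) :=
        mul_le_mul_of_nonneg_left (hb j) (by positivity)
      refine h3.trans (le_of_eq ?_)
      rw [div_pow]
      ring
    · have hq0 : 0 ≤ r / lam := by positivity
      have hq1 : r / lam < 1 := (div_lt_one hlam).2 hrlt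
      simpa using (tendsto_pow_atTop_nhds_zero_of_lt_one hq0 hq1).const_mul C
  have hlt_of_P : ∀ x, P x → locRadR A x < lam := fun x hp =>
    locRad_lt_of_tendsto A x hlam (h2 x hp)
  -- membership of iterates in the cone
  have hAj : ∀ (j : ℕ), ∀ x ∈ K, (A ^ j).mulVec x ∈ K := by
    intro j
    induction j with
    | zero => intro x hx; simpa [Matrix.one_mulVec] using hx
    | succ j ih =>
        intro x hx
        rw [pow_succ', ← Matrix.mulVec_mulVec]
        exact hA (ih x hx)
  -- closure properties of P
  have hPadd : ∀ x y, P x → P y → P (x + y) := by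
    rintro x y ⟨C₁, r₁, hC₁, hr₁, hrlt₁, hb₁⟩ ⟨C₂, r₂, hC₂, hr₂, hrlt₂, hb₂⟩
    refine ⟨C₁ + C₂, max r₁ r₂, by positivity, le_trans hr₁ (le_max_left _ _),
      max_lt hrlt₁ hrlt₂, fun j => ?_⟩
    rw [Matrix.mulVec_add]
    calc ‖(A ^ j).mulVec x + (A ^ j).mulVec y‖
        ≤ ‖(A ^ j).mulVec x‖ + ‖(A ^ j).mulVec y‖ := norm_add_le _ _
      _ ≤ C₁ * r₁ ^ j + C₂ * r₂ ^ j := add_le_add (hb₁ j) (hb₂ j)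
      _ ≤ C₁ * max r₁ r₂ ^ j + C₂ * max r₁ r₂ ^ j := by
          apply add_le_add
          · exact mul_le_mul_of_nonneg_left (pow_le_pow_left₀ hr₁ (le_max_left _ _) j) hC₁
          · exact mul_le_mul_of_nonneg_left (pow_le_pow_left₀ hr₂ (le_max_right _ _) j) hC₂
      _ = (C₁ + C₂) * max r₁ r₂ ^ j := by ring
  have hPsmul : ∀ (c : ℝ) x, P x → P (c • x) := by
    rintro c x ⟨C, r, hC, hr0, hrlt, hb⟩
    refine ⟨|c| * C, r, by positivity, hr0, hrlt, fun j => ?_⟩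
    rw [Matrix.mulVec_smul, norm_smul, Real.norm_eq_abs, mul_assoc]
    exact mul_le_mul_of_nonneg_left (hb j) (abs_nonneg c)
  have hPA : ∀ x, P x → P (A.mulVec x) := by
    rintro x ⟨C, r, hC, hr0, hrlt, hb⟩
    refine ⟨C * r, r, by positivity, hr0, hrlt, fun j => ?_⟩
    rw [Matrix.mulVec_mulVec, ← pow_succ]
    calc ‖(A ^ (j + 1)).mulVec x‖ ≤ C * r ^ (j + 1) := hb (j + 1)
      _ = C * r * r ^ j := by rw [pow_succ]; ring
  obtain ⟨γ, hγ0, hγ⟩ := cone_normal hK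
  have hPmono : ∀ u ∈ K, ∀ v ∈ K, P (u + v) → P u := by
    rintro u hu v hv ⟨C, r, hC, hr0, hrlt, hb⟩
    refine ⟨γ * C, r, by positivity, hr0, hrlt, fun j => ?_⟩
    calc ‖(A ^ j).mulVec u‖ ≤ γ * ‖(A ^ j).mulVec u + (A ^ j).mulVec v‖ :=
          hγ _ (hAj j u hu) _ (hAj j v hv)
      _ = γ * ‖(A ^ j).mulVec (u + v)‖ := by rw [Matrix.mulVec_add]
      _ ≤ γ * (C * r ^ j) := mul_le_mul_of_nonneg_left (hb j) hγ0
      _ = γ * C * r ^ j := by ring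
  -- series convergence from P
  have h4 : ∀ x, P x → ∃ l, Filter.Tendsto
      (fun N => ∑ j ∈ Finset.range N, (lam ^ (j + 1))⁻¹ • (A ^ j).mulVec x)
      Filter.atTop (nhds l) := by
    rintro x ⟨C, r, hC, hr0, hrlt, hb⟩
    have hq0 : 0 ≤ r / lam := by positivity
    have hq1 : r / lam < 1 := (div_lt_one hlam).2 hrlt
    have hsummable : Summable (fun j : ℕ => (lam ^ (j + 1))⁻¹ • (A ^ j).mulVec x) := by
      apply Summable.of_norm_bounded (g := fun j : ℕ => (C / lam) * (r / lam) ^ j)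
        ((summable_geometric_of_lt_one hq0 hq1).mul_left _)
      intro j
      rw [norm_smul, Real.norm_eq_abs, abs_inv, abs_pow, abs_of_pos hlam]
      calc (lam ^ (j + 1))⁻¹ * ‖(A ^ j).mulVec x‖
          ≤ (lam ^ (j + 1))⁻¹ * (C * r ^ j) :=
            mul_le_mul_of_nonneg_left (hb j) (by positivity)
        _ = C / lam * (r / lam) ^ j := by
            rw [div_pow, pow_succ', mul_inv]
            ring
    exact ⟨_, hsummable.hasSum.tendsto_sum_nat⟩
  -- convergence of the series implies the spectral condition
  have h5 : ∀ x, (∃ l, Filter.Tendsto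
      (fun N => ∑ j ∈ Finset.range N, (lam ^ (j + 1))⁻¹ • (A ^ j).mulVec x)
      Filter.atTop (nhds l)) → locRadR A x < lam := by
    rintro x ⟨l, hl⟩
    have hterm : Filter.Tendsto (fun j : ℕ => (lam ^ (j + 1))⁻¹ • (A ^ j).mulVec x)
        atTop (𝓝 0) := by
      have hshift := hl.comp (tendsto_add_atTop_nat 1)
      have hdiff := hshift.sub hl
      rw [sub_self] at hdiff
      apply hdiff.congr
      intro j
      simp only [Function.comp_apply, Finset.sum_range_succ]
      abel
    apply locRad_lt_of_tendsto A x hlam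
    have h7 := hterm.const_smul lam
    rw [smul_zero] at h7
    have h6 := (continuous_cplx.tendsto 0).comp h7
    rw [cplx_zero] at h6
    apply h6.congr
    intro j
    simp only [Function.comp_apply]
    rw [smul_smul, cplx_smul, cplxM_mulVec, cplxM_pow]
    congr 1
    have hlne : (lam : ℂ) ≠ 0 := Complex.ofReal_ne_zero.mpr hlam.ne'
    rw [pow_succ']
    push_cast
    rw [mul_inv, ← mul_assoc, mul_inv_cancel₀ hlne, one_mul]
  refine ⟨⟨fun x hx => hx.1, ?_, ?_, ?_⟩, ?_, ?_⟩
  · -- addition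
    rintro x ⟨hxK, hx⟩ y ⟨hyK, hy⟩
    exact ⟨hK.2.1 x hxK y hyK, hlt_of_P _ (hPadd x y (h1 x hx) (h1 y hy))⟩
  · -- smul
    rintro c hc x ⟨hxK, hx⟩
    exact ⟨hK.2.2.1 c hc x hxK, hlt_of_P _ (hPsmul c x (h1 x hx))⟩
  · -- extremality
    rintro u hu v hv ⟨huvK, huv⟩
    have hPu : P u := hPmono u hu v hv (h1 _ huv)
    have hPv : P v := by
      rw [add_comm] at huv
      exact hPmono v hv u hu (h1 _ huv)
    exact ⟨⟨hu, hlt_of_P _ hPu⟩, ⟨hv, hlt_of_P _ hPv⟩⟩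
  · -- invariance
    rintro x ⟨hxK, hx⟩
    exact ⟨hA hxK, hlt_of_P _ (hPA x (h1 x hx))⟩
  · -- coincidence with the convergence set
    ext x
    simp only [Set.mem_setOf_eq]
    constructor
    · rintro ⟨hxK, hx⟩
      exact ⟨hxK, h4 x (h1 x hx)⟩
    · rintro ⟨hxK, hx⟩
      exact ⟨hxK, h5 x hx⟩
end

section
/- Let A be an n×n complex matrix such that ρ(A) is an eigenvalue of A. Let z be an eigenvector of Aᵀ for the eigenvalue ρ(A) associated with a maximal Jordan block, i.e. z = (Aᵀ − ρ(A)I)^{ν−1} w for some generalized eigenvector w of Aᵀ of order ν = ν_{ρ(A)}(A). Then ⟨z, x⟩ = 0 for every vector x with sp_A(x) ≺ (ρ(A), ν_{ρ(A)}(A)). -/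
open Matrix Module

section MBHelpers
variable {n : ℕ}

lemma toEnd_eq' (M : Matrix (Fin n) (Fin n) ℂ) : toEnd M = Matrix.toLinAlgEquiv' M := by
  ext x
  simp [toEnd, Matrix.toLin'_apply, Matrix.toLinAlgEquiv'_apply]

lemma toEnd_pow_apply_s16 (M : Matrix (Fin n) (Fin n) ℂ) (μ : ℂ) (k : ℕ) (x : Fin n → ℂ) :
    ((toEnd M - μ • 1) ^ k) x = ((M - μ • 1) ^ k).mulVec x := by
  have h : toEnd M - μ • 1 = Matrix.toLinAlgEquiv' (M - μ • 1) := by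
    rw [map_sub, _root_.map_smul, _root_.map_one, toEnd_eq']
  rw [h, ← map_pow, Matrix.toLinAlgEquiv'_apply]

lemma spectrum_toEnd (M : Matrix (Fin n) (Fin n) ℂ) :
    spectrum ℂ (toEnd M) = spectrum ℂ M := by
  rw [toEnd_eq']
  exact AlgEquiv.spectrum_eq Matrix.toLinAlgEquiv' M

lemma maxGen_eq_bot_of_notMem_spectrum (M : Matrix (Fin n) (Fin n) ℂ) {μ : ℂ}
    (h : μ ∉ spectrum ℂ M) : (toEnd M).maxGenEigenspace μ = ⊥ := by
  by_contra hb
  have h1 : (toEnd M).HasUnifEigenvalue μ ⊤ := hb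
  have h2 : (toEnd M).HasEigenvalue μ :=
    (Module.End.hasUnifEigenvalue_iff_hasUnifEigenvalue_one (by norm_num)).mp h1
  exact h ((spectrum_toEnd M) ▸ h2.mem_spectrum)

lemma decomp_mem (M : Matrix (Fin n) (Fin n) ℂ) (μ : ℂ) (x : Fin n → ℂ) :
    x ∈ LinearMap.ker ((toEnd M - μ • 1) ^ n) ⊔ othersSup M μ := by
  have htop := Module.End.iSup_maxGenEigenspace_eq_top (toEnd M)
  have hle : ⨆ ν : ℂ, (toEnd M).maxGenEigenspace ν ≤
      LinearMap.ker ((toEnd M - μ • 1) ^ n) ⊔ othersSup M μ := by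
    apply iSup_le
    intro ν'
    by_cases hh : ν' = μ
    · subst hh
      refine le_trans ?_ le_sup_left
      rw [Module.End.maxGenEigenspace_eq_genEigenspace_finrank]
      intro y hy
      rw [Module.End.mem_genEigenspace_nat] at hy
      have hfr : finrank ℂ (Fin n → ℂ) = n := by simp
      rw [hfr] at hy
      exact hy
    · exact le_trans (le_iSup₂ (f := fun (ν : ℂ) (_ : ν ≠ μ) => (toEnd M).maxGenEigenspace ν) ν' hh)
        le_sup_right
  exact hle (htop ▸ Submodule.mem_top)

lemma hasComp_mem_spectrum (M : Matrix (Fin n) (Fin n) ℂ) {μ : ℂ} {x : Fin n → ℂ}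
    (h : HasComp M μ x) : μ ∈ spectrum ℂ M := by
  by_contra hμ
  apply h
  have hbot := maxGen_eq_bot_of_notMem_spectrum M hμ
  have htop := Module.End.iSup_maxGenEigenspace_eq_top (toEnd M)
  have hle : ⨆ ν : ℂ, (toEnd M).maxGenEigenspace ν ≤ othersSup M μ := by
    apply iSup_le
    intro ν'
    by_cases hh : ν' = μ
    · subst hh; rw [hbot]; exact bot_le
    · exact le_iSup₂ (f := fun (ν : ℂ) (_ : ν ≠ μ) => (toEnd M).maxGenEigenspace ν) ν' hh
  exact hle (htop ▸ Submodule.mem_top)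

end MBHelpers

theorem maximal_block_left_eigenvector_orthogonal {n : ℕ} (A : Matrix (Fin n) (Fin n) ℂ)
    (ρ : ℝ) (hρ : ρ = sSup {r : ℝ | ∃ μ : ℂ, μ ∈ spectrum ℂ A ∧ r = ‖μ‖})
    (hev : ∃ v : Fin n → ℂ, v ≠ 0 ∧ A.mulVec v = (ρ : ℂ) • v)
    (ν : ℕ) (hν : ν = matIdx A (ρ : ℂ))
    (w z : Fin n → ℂ)
    (hw₁ : ((Aᵀ - (ρ : ℂ) • 1) ^ ν).mulVec w = 0)
    (hw₂ : ((Aᵀ - (ρ : ℂ) • 1) ^ (ν - 1)).mulVec w ≠ 0)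
    (hz : z = ((Aᵀ - (ρ : ℂ) • 1) ^ (ν - 1)).mulVec w) :
    ∀ x : Fin n → ℂ, lexLt (specPair A x) (ρ, (ν : ℝ)) → ∑ i, z i * x i = 0 := by
  intro x hlt
  have hT : Aᵀ - (ρ : ℂ) • 1 = (A - (ρ : ℂ) • 1)ᵀ := by
    rw [Matrix.transpose_sub, Matrix.transpose_smul, Matrix.transpose_one]
  have hν1 : 0 < ν := by
    rcases Nat.eq_zero_or_pos ν with h | h
    · exfalso
      apply hw₂
      rw [h] at hw₁ ⊢
      simpa using hw₁
    · exact h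
  have hzeig : Aᵀ.mulVec z = (ρ : ℂ) • z := by
    have h0 : (Aᵀ - (ρ : ℂ) • 1).mulVec z = 0 := by
      rw [hz, Matrix.mulVec_mulVec, ← pow_succ', Nat.sub_add_cancel hν1]
      exact hw₁
    rw [Matrix.sub_mulVec, Matrix.smul_mulVec, Matrix.one_mulVec, sub_eq_zero] at h0
    exact h0
  have hvecMul : z ᵥ* A = (ρ : ℂ) • z := by
    rw [← Matrix.mulVec_transpose]; exact hzeig
  have hdotA : ∀ u : Fin n → ℂ, z ⬝ᵥ (A.mulVec u) = (ρ : ℂ) * (z ⬝ᵥ u) := by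
    intro u
    rw [Matrix.dotProduct_mulVec, hvecMul, smul_dotProduct, smul_eq_mul]
  have hdotB : ∀ (μ : ℂ) (u : Fin n → ℂ),
      z ⬝ᵥ ((A - μ • 1).mulVec u) = ((ρ : ℂ) - μ) * (z ⬝ᵥ u) := by
    intro μ u
    rw [Matrix.sub_mulVec, Matrix.smul_mulVec, Matrix.one_mulVec,
      dotProduct_sub, hdotA, dotProduct_smul, smul_eq_mul]
    ring
  have hperp_ker : ∀ k, k ≤ ν - 1 → ∀ y : Fin n → ℂ,
      ((A - (ρ : ℂ) • 1) ^ k).mulVec y = 0 → z ⬝ᵥ y = 0 := by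
    intro k hk y hy
    rw [hz, hT, ← Matrix.transpose_pow, Matrix.mulVec_transpose, ← Matrix.dotProduct_mulVec]
    have hsplit : ν - 1 = (ν - 1 - k) + k := (Nat.sub_add_cancel hk).symm
    rw [hsplit, pow_add, ← Matrix.mulVec_mulVec, hy, Matrix.mulVec_zero, dotProduct_zero]
  have hperp_gen : ∀ (μ : ℂ), μ ≠ (ρ : ℂ) → ∀ (k : ℕ) (y : Fin n → ℂ),
      ((A - μ • 1) ^ k).mulVec y = 0 → z ⬝ᵥ y = 0 := by
    intro μ hμ k
    induction k with
    | zero =>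
      intro y hy
      simp only [pow_zero, Matrix.one_mulVec] at hy
      simp [hy]
    | succ k ih =>
      intro y hy
      have hk' : ((A - μ • 1) ^ k).mulVec ((A - μ • 1).mulVec y) = 0 := by
        rw [Matrix.mulVec_mulVec, ← pow_succ]
        exact hy
      have h0 := ih _ hk'
      rw [hdotB] at h0
      rcases mul_eq_zero.mp h0 with h | h
      · exact absurd (sub_eq_zero.mp h).symm hμ
      · exact h
  have hperp_others : ∀ y ∈ othersSup A (ρ : ℂ), z ⬝ᵥ y = 0 := by
    intro y hy
    let φ : (Fin n → ℂ) →ₗ[ℂ] ℂ :=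
      { toFun := fun u => z ⬝ᵥ u
        map_add' := fun u v => dotProduct_add z u v
        map_smul' := fun c u => by simp [dotProduct_smul] }
    have hle : othersSup A (ρ : ℂ) ≤ LinearMap.ker φ := by
      apply iSup_le
      intro μ
      apply iSup_le
      intro hμ u hu
      rw [Module.End.mem_maxGenEigenspace] at hu
      obtain ⟨k, hk⟩ := hu
      rw [toEnd_pow_apply_s16] at hk
      exact LinearMap.mem_ker.mpr (hperp_gen μ hμ k u hk)
    exact LinearMap.mem_ker.mp (hle hy)
  show z ⬝ᵥ x = 0
  by_cases hcomp : HasComp A (ρ : ℂ) x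
  swap
  · exact hperp_others x (not_not.mp hcomp)
  have hρA : (ρ : ℂ) ∈ spectrum ℂ A := by
    obtain ⟨v, hv0, hv⟩ := hev
    have hE : (toEnd A).HasEigenvalue (ρ : ℂ) := by
      apply Module.End.hasEigenvalue_of_hasEigenvector (x := v)
      refine ⟨Module.End.mem_eigenspace_iff.mpr ?_, hv0⟩
      rw [toEnd, Matrix.toLin'_apply]
      exact hv
    exact (spectrum_toEnd A) ▸ hE.mem_spectrum
  have hSfin : ({r : ℝ | ∃ μ : ℂ, μ ∈ spectrum ℂ A ∧ r = ‖μ‖}).Finite := by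
    have he : {r : ℝ | ∃ μ : ℂ, μ ∈ spectrum ℂ A ∧ r = ‖μ‖}
        = (fun μ : ℂ => ‖μ‖) '' spectrum ℂ A := by
      ext r
      simp [Set.mem_image, eq_comm]
    rw [he]
    exact (A.finite_spectrum).image _
  have hSbdd : BddAbove {r : ℝ | ∃ μ : ℂ, μ ∈ spectrum ℂ A ∧ r = ‖μ‖} := hSfin.bddAbove
  have hρnn : 0 ≤ ρ := by
    have h1 : ‖((ρ : ℝ) : ℂ)‖ ≤ sSup {r : ℝ | ∃ μ : ℂ, μ ∈ spectrum ℂ A ∧ r = ‖μ‖} :=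
      le_csSup hSbdd ⟨(ρ : ℂ), hρA, rfl⟩
    rw [← hρ] at h1
    exact le_trans (norm_nonneg _) h1
  have hnormρ : ‖((ρ : ℝ) : ℂ)‖ = ρ := by
    rw [Complex.norm_real, Real.norm_eq_abs, abs_of_nonneg hρnn]
  have hsubset : {r : ℝ | ∃ μ : ℂ, HasComp A μ x ∧ r = ‖μ‖} ⊆
      {r : ℝ | ∃ μ : ℂ, μ ∈ spectrum ℂ A ∧ r = ‖μ‖} := by
    rintro r ⟨μ, hμ, rfl⟩
    exact ⟨μ, hasComp_mem_spectrum A hμ, rfl⟩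
  have hLbdd : BddAbove {r : ℝ | ∃ μ : ℂ, HasComp A μ x ∧ r = ‖μ‖} := hSbdd.mono hsubset
  have hρmem : ρ ∈ {r : ℝ | ∃ μ : ℂ, HasComp A μ x ∧ r = ‖μ‖} := ⟨(ρ : ℂ), hcomp, hnormρ.symm⟩
  have hloc_ge : ρ ≤ locRad A x := le_csSup hLbdd hρmem
  have hloc_le : locRad A x ≤ ρ := by
    apply csSup_le ⟨ρ, hρmem⟩
    rintro r ⟨μ, hμ, rfl⟩
    have h3 : ‖μ‖ ≤ sSup {r : ℝ | ∃ μ' : ℂ, μ' ∈ spectrum ℂ A ∧ r = ‖μ'‖} :=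
      le_csSup hSbdd ⟨μ, hasComp_mem_spectrum A hμ, rfl⟩
    rw [← hρ] at h3
    exact h3
  have hloc : locRad A x = ρ := le_antisymm hloc_le hloc_ge
  have hord : ordOf A x < ν := by
    rcases hlt with ⟨hle, hne⟩
    rcases hle with h | ⟨h1', h2'⟩
    · exfalso
      have h' : locRad A x < ρ := h
      rw [hloc] at h'
      exact lt_irrefl _ h'
    · have h2'' : (ordOf A x : ℝ) ≤ (ν : ℝ) := h2'
      have hne2 : (ordOf A x : ℝ) ≠ (ν : ℝ) := by
        intro hh
        apply hne
        have hsp : specPair A x = (locRad A x, (ordOf A x : ℝ)) := rfl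
        rw [hsp, hloc, hh]
      have hlt' : (ordOf A x : ℝ) < (ν : ℝ) := lt_of_le_of_ne h2'' hne2
      exact_mod_cast hlt'
  have hbddO : BddAbove {k : ℕ | ∃ μ : ℂ,
      HasComp A μ x ∧ ‖μ‖ = locRad A x ∧ k = compOrd A μ x} := by
    refine ⟨n, ?_⟩
    rintro k ⟨μ, -, -, rfl⟩
    exact Nat.sInf_le (decomp_mem A μ x)
  have hcmem : compOrd A (ρ : ℂ) x ∈ {k : ℕ | ∃ μ : ℂ,
      HasComp A μ x ∧ ‖μ‖ = locRad A x ∧ k = compOrd A μ x} :=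
    ⟨(ρ : ℂ), hcomp, by rw [hnormρ, hloc], rfl⟩
  have hcord : compOrd A (ρ : ℂ) x ≤ ordOf A x := le_csSup hbddO hcmem
  have hcν : compOrd A (ρ : ℂ) x ≤ ν - 1 := by omega
  have hmem : x ∈ LinearMap.ker ((toEnd A - (ρ : ℂ) • 1) ^ (compOrd A (ρ : ℂ) x))
      ⊔ othersSup A (ρ : ℂ) := by
    have hne' : {k : ℕ | x ∈ LinearMap.ker ((toEnd A - (ρ : ℂ) • 1) ^ k)
        ⊔ othersSup A (ρ : ℂ)}.Nonempty := ⟨n, decomp_mem A (ρ : ℂ) x⟩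
    exact Nat.sInf_mem hne'
  obtain ⟨y, hy, u, hu, hxyu⟩ := Submodule.mem_sup.mp hmem
  have hy0 : z ⬝ᵥ y = 0 := by
    apply hperp_ker _ hcν
    rw [← toEnd_pow_apply_s16]
    exact LinearMap.mem_ker.mp hy
  have hu0 : z ⬝ᵥ u = 0 := hperp_others u hu
  rw [← hxyu, dotProduct_add, hy0, hu0, add_zero]
end
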